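/- arXiv:2504.07186 — 8 statements merged into one kernel-verified Lean document; each statement's English description precedes it below -/
import Mathlib

section
/- If G is a maximal outerplanar graph of order n with 5 ≤ n ≤ 8, then for every vertex i of G the two-element set {i, (i+4) mod n} is a disjunctive dominating set of G; in particular γ₂ᵈ(G) ≤ 2. -/
open SimpleGraph

/-- `G` is (the representation of) a maximal outerplanar graph on the convex polygon
`0, 1, …, n-1`: it contains all outer edges `{i, (i+1) mod n}`, no two of its edges
cross, and it has exactly `2n - 3` edges. -/
def IsMop {n : ℕ} [NeZero n] (G : SimpleGraph (Fin n)) : Prop :=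
  (∀ i : Fin n, G.Adj i (i + 1)) ∧
  (∀ a b c d : Fin n, a < b → b < c → c < d → G.Adj a c → ¬ G.Adj b d) ∧
  G.edgeSet.ncard = 2 * n - 3

/-- An edge of `G` that is not an outer edge of the polygon. -/
def IsDiagonal {n : ℕ} [NeZero n] (G : SimpleGraph (Fin n)) (u v : Fin n) : Prop :=
  G.Adj u v ∧ v ≠ u + 1 ∧ u ≠ v + 1

/-- Three pairwise adjacent vertices all of whose connecting edges are diagonals. -/
def IsInternalTriangle {n : ℕ} [NeZero n] (G : SimpleGraph (Fin n)) (a b c : Fin n) : Prop :=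
  IsDiagonal G a b ∧ IsDiagonal G b c ∧ IsDiagonal G a c

/-- The number of vertices of `G` having degree `2`. -/
noncomputable def degTwoCount {n : ℕ} (G : SimpleGraph (Fin n)) : ℕ :=
  {v : Fin n | (G.neighborSet v).ncard = 2}.ncard

/-- `D` is a dominating set of `G`. -/
def IsDomSet {V : Type*} (G : SimpleGraph V) (D : Set V) : Prop :=
  ∀ v ∉ D, ∃ u ∈ D, G.Adj u v

/-- `D` is a disjunctive dominating set (2DD-set) of `G`: every vertex outside `D`
has a neighbor in `D` or at least two vertices of `D` at distance exactly `2`. -/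
def IsDisjDomSet {V : Type*} (G : SimpleGraph V) (D : Set V) : Prop :=
  ∀ v ∉ D, (∃ u ∈ D, G.Adj u v) ∨
    ∃ u ∈ D, ∃ w ∈ D, u ≠ w ∧ G.dist u v = 2 ∧ G.dist w v = 2

/-- The domination number `γ(G)`. -/
noncomputable def domNum {V : Type*} [Fintype V] (G : SimpleGraph V) : ℕ :=
  sInf {k : ℕ | ∃ D : Set V, IsDomSet G D ∧ D.ncard = k}

/-- The disjunctive domination number `γ₂ᵈ(G)`. -/
noncomputable def disjDomNum {V : Type*} [Fintype V] (G : SimpleGraph V) : ℕ :=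
  sInf {k : ℕ | ∃ D : Set V, IsDisjDomSet G D ∧ D.ncard = k}

/-! On the polygon `0, 1, …, n-1`, the outer cycle alone already does the job when
`5 ≤ n ≤ 8`. The vertices `i` and `i + 4` split it into two arcs, of lengths `4` and
`n - 4 ≤ 4`. Every vertex of an arc is adjacent to one of its ends, except the midpoint of an
arc of length `4`, which has a common neighbour with each end and is therefore adjacent to an
end or at distance exactly `2` from both. -/

def DisjDominates {V : Type*} (G : SimpleGraph V) (D : Set V) (v : V) : Prop :=
  (∃ u ∈ D, G.Adj u v) ∨ ∃ u ∈ D, ∃ w ∈ D, u ≠ w ∧ G.dist u v = 2 ∧ G.dist w v = 2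

lemma isDisjDomSet_iff {V : Type*} {G : SimpleGraph V} {D : Set V} :
    IsDisjDomSet G D ↔ ∀ v ∉ D, DisjDominates G D v := Iff.rfl

lemma disjDomNum_le_ncard {V : Type*} [Fintype V] {G : SimpleGraph V} {D : Set V}
    (hD : IsDisjDomSet G D) : disjDomNum G ≤ D.ncard :=
  Nat.sInf_le ⟨D, hD, rfl⟩

lemma SimpleGraph.dist_eq_two_of_adj_of_adj {V : Type*} {G : SimpleGraph V} {a b c : V}
    (hab : G.Adj a b) (hbc : G.Adj b c) (hac : a ≠ c) (hnac : ¬ G.Adj a c) :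
    G.dist a c = 2 := by
  rw [dist, edist_eq_two_iff.mpr ⟨hac, hnac, b, hab, hbc.symm⟩]
  rfl

namespace DisjDominates

variable {V : Type*} {G : SimpleGraph V} {D : Set V} {v : V}

lemma of_adj {u : V} (hu : u ∈ D) (huv : G.Adj u v) : DisjDominates G D v :=
  Or.inl ⟨u, hu, huv⟩

lemma pair_of_adj_of_adj {a b x y : V} (hab : a ≠ b) (hav : a ≠ v) (hbv : b ≠ v)
    (hax : G.Adj a x) (hxv : G.Adj x v) (hby : G.Adj b y) (hyv : G.Adj y v) :
    DisjDominates G {a, b} v := by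
  by_cases hadj_a : G.Adj a v
  · exact of_adj (by simp) hadj_a
  by_cases hadj_b : G.Adj b v
  · exact of_adj (by simp) hadj_b
  exact Or.inr ⟨a, by simp, b, by simp, hab, G.dist_eq_two_of_adj_of_adj hax hxv hav hadj_a,
    G.dist_eq_two_of_adj_of_adj hby hyv hbv hadj_b⟩

end DisjDominates

lemma Fin.cases_of_five_le_of_le_eight {n : ℕ} [NeZero n] (hn5 : 5 ≤ n) (hn8 : n ≤ 8)
    (j : Fin n) :
    j = 0 ∨ j = 1 ∨ j = 2 ∨ j = 3 ∨ j = 4 ∨ j = 5 ∨ j + 1 = 0 ∨ (n = 8 ∧ j = 6) := by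
  obtain ⟨k, hk⟩ := j
  simp only [Fin.ext_iff, Fin.coe_ofNat_eq_mod, Nat.zero_mod, Fin.val_add, Nat.add_mod_mod]
  interval_cases n <;> omega

section OuterCycle

open Fin.CommRing

variable {n : ℕ} [NeZero n] {G : SimpleGraph (Fin n)}

lemma disjDominates_add_two (hcyc : ∀ i, G.Adj i (i + 1)) (hn : 5 ≤ n) (a : Fin n) :
    DisjDominates G {a, a + 4} (a + 2) := by
  have h2 : (2 : Fin n) ≠ 0 := by simp [Fin.ext_iff, Nat.mod_eq_of_lt (by omega : 2 < n)]
  have h4 : (4 : Fin n) ≠ 0 := by simp [Fin.ext_iff, Nat.mod_eq_of_lt (by omega : 4 < n)]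
  have h24 : (2 : Fin n) ≠ 4 := by
    simp [Fin.ext_iff, Nat.mod_eq_of_lt (by omega : 2 < n), Nat.mod_eq_of_lt (by omega : 4 < n)]
  refine DisjDominates.pair_of_adj_of_adj (x := a + 1) (y := a + 3) ?_ ?_ ?_ (hcyc a) ?_ ?_ ?_
  · simpa using h4
  · simpa using h2
  · simpa using h24.symm
  · convert hcyc (a + 1) using 1; ring
  · convert (hcyc (a + 3)).symm using 1; ring
  · convert (hcyc (a + 2)).symm using 1; ring

lemma isDisjDomSet_pair_add_four (hcyc : ∀ i, G.Adj i (i + 1)) (hn5 : 5 ≤ n) (hn8 : n ≤ 8)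
    (i : Fin n) : IsDisjDomSet G {i, i + 4} := by
  rw [isDisjDomSet_iff]
  intro v hv
  obtain ⟨j, rfl⟩ : ∃ j, v = i + j := ⟨v - i, by ring⟩
  rcases Fin.cases_of_five_le_of_le_eight hn5 hn8 j with
    rfl | rfl | rfl | rfl | rfl | rfl | hj | ⟨rfl, rfl⟩
  · simp at hv
  · exact DisjDominates.of_adj (by simp) (hcyc i)
  · exact disjDominates_add_two hcyc hn5 i
  · refine DisjDominates.of_adj (u := i + 4) (by simp) ?_
    convert (hcyc (i + 3)).symm using 1; ring
  · simp at hv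
  · refine DisjDominates.of_adj (u := i + 4) (by simp) ?_
    convert hcyc (i + 4) using 1; ring
  · refine DisjDominates.of_adj (u := i) (by simp) ?_
    convert (hcyc (i + j)).symm using 1; rw [add_assoc, hj, add_zero]
  · -- on the octagon, `i + 6` is the midpoint of the arc from `i + 4` back to `i`
    have hpair : ({i, i + 4} : Set (Fin 8)) = {i + 4, i + 4 + 4} := by
      rw [Set.pair_comm, show i + 4 + 4 = i by rw [add_assoc, add_eq_left]; simp]
    rw [hpair, show i + 6 = i + 4 + 2 by ring]
    exact disjDominates_add_two hcyc hn5 (i + 4)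

end OuterCycle

theorem mop_five_to_eight_disjDom {n : ℕ} [NeZero n] (G : SimpleGraph (Fin n))
    (hn5 : 5 ≤ n) (hn8 : n ≤ 8) (hG : IsMop G) :
    (∀ i : Fin n, IsDisjDomSet G {i, i + 4}) ∧ disjDomNum G ≤ 2 := by
  have hdom := isDisjDomSet_pair_add_four hG.1 hn5 hn8
  refine ⟨hdom, (disjDomNum_le_ncard (hdom 0)).trans (Set.ncard_pair ?_).le⟩
  simp [Fin.ext_iff, Nat.mod_eq_of_lt (by omega : 4 < n)]
end

section
/- Let G be a maximal outerplanar graph of order n ≥ 4 and let {i, j} with i < j be a diagonal of G (so j − i ≥ 2 and (i,j) ≠ (0, n−1)). Then there exists a vertex k with i < k < j that is adjacent to both i and j, and there exists a vertex l with l < i or l > j that is adjacent to both i and j. -/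
open SimpleGraph

private def mopES {n : ℕ} (H : SimpleGraph (Fin n)) (i j : Fin n) : Set (Sym2 (Fin n)) :=
  {e | ∃ x y : Fin n, i ≤ x ∧ x < y ∧ y ≤ j ∧ H.Adj x y ∧ e = s(x,y)}

private lemma mopES_bound {n : ℕ} (H : SimpleGraph (Fin n))
    (NC : ∀ a b c d : Fin n, a < b → b < c → c < d → H.Adj a c → ¬ H.Adj b d) :
    ∀ t : ℕ, ∀ i j : Fin n, i < j → (j:ℕ) - (i:ℕ) = t →
      (mopES H i j).ncard ≤ 2 * t - 1 := by
  intro t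
  induction t using Nat.strong_induction_on with
  | _ t IH =>
    intro i j hij ht
    have hijv : (i:ℕ) < (j:ℕ) := hij
    rcases Nat.lt_or_ge t 2 with ht2 | ht2
    · have hsub : mopES H i j ⊆ {s(i,j)} := by
        rintro e ⟨x, y, hix, hxy, hyj, hadj, rfl⟩
        have h1 : (i:ℕ) ≤ x := hix
        have h2 : (x:ℕ) < y := hxy
        have h3 : (y:ℕ) ≤ j := hyj
        have hx : x = i := Fin.ext (by omega)
        have hy : y = j := Fin.ext (by omega)
        simp [hx, hy]
      have := Set.ncard_le_ncard hsub
      simp only [Set.ncard_singleton] at this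
      omega
    · by_cases hA : {x : Fin n | i < x ∧ (x:ℕ)+1 < (j:ℕ) ∧ H.Adj x j}.Nonempty
      · obtain ⟨a, ha, hmin⟩ := Set.exists_min_image _ id (Set.toFinite _) hA
        obtain ⟨hia, haj1, hadjaj⟩ := ha
        have hiav : (i:ℕ) < (a:ℕ) := hia
        have haj : a < j := by exact Fin.lt_def.mpr (by omega)
        have hsub : mopES H i j ⊆ mopES H i a ∪ mopES H a j ∪ {s(i,j)} := by
          rintro e ⟨x, y, hix, hxy, hyj, hadj, rfl⟩
          by_cases hya : y ≤ a
          · exact Or.inl (Or.inl ⟨x, y, hix, hxy, hya, hadj, rfl⟩)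
          · by_cases hxa : a ≤ x
            · exact Or.inl (Or.inr ⟨x, y, hxa, hxy, hyj, hadj, rfl⟩)
            · push_neg at hya hxa
              by_cases hyj' : y = j
              · rcases eq_or_lt_of_le hix with hxi | hxi
                · rw [hyj', ← hxi]; exact Or.inr rfl
                · exfalso
                  have hxA : x ∈ {x : Fin n | i < x ∧ (x:ℕ)+1 < (j:ℕ) ∧ H.Adj x j} := by
                    refine ⟨hxi, ?_, hyj' ▸ hadj⟩
                    have : (x:ℕ) < a := hxa
                    have hy2 : (y:ℕ) ≤ (j:ℕ) := hyj
                    omega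
                  have := hmin x hxA
                  simp only [id] at this
                  exact absurd hxa (not_lt.mpr this)
              · have hylt : y < j := lt_of_le_of_ne hyj hyj'
                exact absurd hadjaj (NC x a y j hxa hya hylt hadj)
        have h1 := IH ((a:ℕ) - (i:ℕ)) (by omega) i a hia rfl
        have h2 := IH ((j:ℕ) - (a:ℕ)) (by omega) a j haj rfl
        have hc1 := Set.ncard_le_ncard hsub (Set.toFinite _)
        have hc2 := Set.ncard_union_le (mopES H i a ∪ mopES H a j) {s(i,j)}
        have hc3 := Set.ncard_union_le (mopES H i a) (mopES H a j)
        simp only [Set.ncard_singleton] at hc2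
        have hav1 : (a:ℕ)+1 < (j:ℕ) := haj1
        omega
      · push_neg at hA
        simp only [Set.not_nonempty_iff_eq_empty, Set.eq_empty_iff_forall_notMem] at hA
        have hj1 : (j:ℕ) - 1 < n := by omega
        set j' : Fin n := ⟨(j:ℕ) - 1, hj1⟩ with hj'def
        have hij' : i < j' := Fin.lt_def.mpr (by simp [hj'def]; omega)
        have hsub : mopES H i j ⊆ mopES H i j' ∪ {s(i,j), s(j',j)} := by
          rintro e ⟨x, y, hix, hxy, hyj, hadj, rfl⟩
          by_cases hyj' : y = j
          · subst hyj'
            right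
            have hnx := hA x
            simp only [Set.mem_setOf_eq, not_and] at hnx
            rcases eq_or_lt_of_le hix with hxi | hxi
            · subst hxi; exact Or.inl rfl
            · have hxv : (x:ℕ) < (y:ℕ) := hxy
              have : ¬ ((x:ℕ)+1 < (y:ℕ) ∧ H.Adj x y) := by
                intro ⟨u1, u2⟩; exact hnx hxi u1 u2
              have hx1 : (x:ℕ) + 1 = (y:ℕ) := by
                by_contra hc
                exact this ⟨by omega, hadj⟩
              have : x = j' := Fin.ext (by simp [hj'def]; omega)
              subst this
              exact Or.inr rfl
          · have hylt : y < j := lt_of_le_of_ne hyj hyj'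
            have hyle : y ≤ j' := Fin.le_def.mpr (by simp [hj'def]; have : (y:ℕ) < j := hylt; omega)
            exact Or.inl ⟨x, y, hix, hxy, hyle, hadj, rfl⟩
        have h1 := IH (t-1) (by omega) i j' hij' (by simp [hj'def]; omega)
        have hc1 := Set.ncard_le_ncard hsub (Set.toFinite _)
        have hc2 := Set.ncard_union_le (mopES H i j') {s(i,j), s(j',j)}
        have hc3 := Set.ncard_insert_le (s(i,j)) ({s(j',j)} : Set (Sym2 (Fin n)))
        simp only [Set.ncard_singleton] at hc3
        omega

private lemma mop_edge_bound {n : ℕ} (hn : 2 ≤ n) (H : SimpleGraph (Fin n))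
    (NC : ∀ a b c d : Fin n, a < b → b < c → c < d → H.Adj a c → ¬ H.Adj b d) :
    H.edgeSet.ncard ≤ 2 * n - 3 := by
  have h0 : (0:ℕ) < n := by omega
  have hn1 : n - 1 < n := by omega
  set i : Fin n := ⟨0, h0⟩ with hidef
  set j : Fin n := ⟨n-1, hn1⟩ with hjdef
  have hsub : H.edgeSet ⊆ mopES H i j := by
    intro e he
    induction e with
    | h x y =>
      rw [SimpleGraph.mem_edgeSet] at he
      have hle : ∀ z : Fin n, i ≤ z ∧ z ≤ j := by
        intro z
        constructor
        · exact Fin.le_def.mpr (by simp [hidef])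
        · exact Fin.le_def.mpr (by simp [hjdef]; omega)
      rcases lt_trichotomy x y with h | h | h
      · exact ⟨x, y, (hle x).1, h, (hle y).2, he, rfl⟩
      · exact absurd (h ▸ he) (H.irrefl)
      · exact ⟨y, x, (hle y).1, h, (hle x).2, he.symm, Sym2.eq_swap⟩
  have hij : i < j := Fin.lt_def.mpr (by simp [hidef, hjdef]; omega)
  have := mopES_bound H NC (n-1) i j hij (by simp [hidef, hjdef])
  have hc := Set.ncard_le_ncard hsub (Set.toFinite _)
  omega

private lemma mop_sat {n : ℕ} [NeZero n] {G : SimpleGraph (Fin n)} (hn : 4 ≤ n) (hG : IsMop G)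
    {a b : Fin n} (hab : a < b) (hnadj : ¬ G.Adj a b) :
    ∃ x y : Fin n, G.Adj x y ∧ ((a < x ∧ x < b ∧ b < y) ∨ (x < a ∧ a < y ∧ y < b)) := by
  by_contra hcon
  set G' := G ⊔ fromEdgeSet {s(a,b)} with hG'def
  have hadj' : ∀ x y : Fin n, G'.Adj x y ↔ G.Adj x y ∨ (s(x,y) = s(a,b) ∧ x ≠ y) := by
    intro x y
    rw [hG'def, sup_adj, fromEdgeSet_adj]
    simp only [Set.mem_singleton_iff]
  have hne : a ≠ b := ne_of_lt hab
  have hkey : ∀ x y : Fin n, s(x,y) = s(a,b) → x < y → x = a ∧ y = b := by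
    intro x y hxy hlt
    rw [Sym2.eq_iff] at hxy
    rcases hxy with ⟨h1, h2⟩ | ⟨h1, h2⟩
    · exact ⟨h1, h2⟩
    · exact absurd (h1 ▸ h2 ▸ hlt) (asymm hab)
  have NC' : ∀ p q r w : Fin n, p < q → q < r → r < w → G'.Adj p r → ¬ G'.Adj q w := by
    intro p q r w h1 h2 h3 hpr hqw
    rw [hadj'] at hpr hqw
    rcases hpr with hpr | ⟨hpr, _⟩
    · rcases hqw with hqw | ⟨hqw, _⟩
      · exact hG.2.1 p q r w h1 h2 h3 hpr hqw
      · obtain ⟨rfl, rfl⟩ := hkey q w hqw (lt_trans h2 h3)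
        exact hcon ⟨p, r, hpr, Or.inr ⟨h1, h2, h3⟩⟩
    · obtain ⟨rfl, rfl⟩ := hkey p r hpr (lt_trans h1 h2)
      rcases hqw with hqw | ⟨hqw, _⟩
      · exact hcon ⟨q, w, hqw, Or.inl ⟨h1, h2, h3⟩⟩
      · obtain ⟨rfl, rfl⟩ := hkey q w hqw (lt_trans h2 h3)
        exact absurd h1 (lt_irrefl _)
  have hndiag : ¬ (s(a,b)).IsDiag := by
    rw [Sym2.isDiag_iff_proj_eq]
    exact hne
  have hES : G'.edgeSet = insert s(a,b) G.edgeSet := by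
    rw [hG'def, edgeSet_sup, edgeSet_fromEdgeSet]
    ext e
    simp only [Set.mem_union, Set.mem_diff, Set.mem_singleton_iff, Set.mem_insert_iff,
      Set.mem_setOf_eq]
    constructor
    · rintro (h | ⟨rfl, _⟩)
      · exact Or.inr h
      · exact Or.inl rfl
    · rintro (rfl | h)
      · exact Or.inr ⟨rfl, hndiag⟩
      · exact Or.inl h
  have hmem : s(a,b) ∉ G.edgeSet := by rwa [SimpleGraph.mem_edgeSet]
  have hcount : G'.edgeSet.ncard = G.edgeSet.ncard + 1 := by
    rw [hES, Set.ncard_insert_of_notMem hmem (Set.toFinite _)]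
  have hbd := mop_edge_bound (by omega) G' NC'
  rw [hcount, hG.2.2] at hbd
  omega

lemma fin_succ_eq {n : ℕ} [NeZero n] {p q : Fin n} (h : (p:ℕ) + 1 = (q:ℕ)) : p + 1 = q := by
  apply Fin.ext
  rw [Fin.val_add, Fin.val_one']
  have hqn : (q:ℕ) < n := q.isLt
  have h2 : 1 % n = 1 := Nat.mod_eq_of_lt (by omega)
  rw [h2, h, Nat.mod_eq_of_lt hqn]

lemma fin_adj_succ {n : ℕ} [NeZero n] {G : SimpleGraph (Fin n)}
    (hG1 : ∀ i : Fin n, G.Adj i (i + 1)) {p q : Fin n} (h : (p:ℕ) + 1 = (q:ℕ)) :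
    G.Adj p q := by
  rw [← fin_succ_eq h]; exact hG1 p


theorem mop_diagonal_common_neighbors {n : ℕ} [NeZero n] (G : SimpleGraph (Fin n))
    (hn : 4 ≤ n) (hG : IsMop G) (i j : Fin n) (hij : i < j) (hd : IsDiagonal G i j) :
    (∃ k : Fin n, i < k ∧ k < j ∧ G.Adj i k ∧ G.Adj j k) ∧
    (∃ l : Fin n, (l < i ∨ j < l) ∧ G.Adj i l ∧ G.Adj j l) := by
  have NC := hG.2.1
  have hadj := hd.1
  have hijv : (i:ℕ) < (j:ℕ) := hij
  have hij2 : (i:ℕ) + 2 ≤ (j:ℕ) := by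
    by_contra hc
    exact hd.2.1 (fin_succ_eq (by omega : (i:ℕ) + 1 = (j:ℕ))).symm
  have hjn : (j:ℕ) < n := j.isLt
  have hio : 0 < (i:ℕ) ∨ (j:ℕ) + 1 < n := by
    by_contra hc
    push_neg at hc
    obtain ⟨h1, h2⟩ := hc
    have : i = j + 1 := by
      apply Fin.ext
      rw [Fin.val_add, Fin.val_one']
      have hm : 1 % n = 1 := Nat.mod_eq_of_lt (by omega)
      have hjn1 : (j:ℕ) + 1 = n := by omega
      rw [hm, hjn1, Nat.mod_self]
      omega
    exact hd.2.2 this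
  constructor
  · -- inside common neighbor
    have hk1 : (⟨(i:ℕ)+1, by omega⟩ : Fin n) ∈ {k : Fin n | i < k ∧ k < j ∧ G.Adj i k} := by
      refine ⟨Fin.lt_def.mpr (Nat.lt_succ_self _), Fin.lt_def.mpr (show (i:ℕ)+1 < (j:ℕ) by omega), ?_⟩
      exact fin_adj_succ hG.1 rfl
    obtain ⟨k0, hk0, hmax⟩ := Set.exists_max_image
      {k : Fin n | i < k ∧ k < j ∧ G.Adj i k} id (Set.toFinite _) ⟨_, hk1⟩
    obtain ⟨hik0, hk0j, hadjik0⟩ := hk0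
    refine ⟨k0, hik0, hk0j, hadjik0, ?_⟩
    by_cases hjk : G.Adj k0 j
    · exact hjk.symm
    · exfalso
      obtain ⟨x, y, hxy, hc⟩ := mop_sat hn hG hk0j hjk
      rcases hc with ⟨h1, h2, h3⟩ | ⟨h1, h2, h3⟩
      · exact NC i x j y (lt_trans hik0 h1) h2 h3 hadj hxy
      · rcases lt_trichotomy x i with hxi | hxi | hxi
        · exact NC x i y j hxi (lt_trans hik0 h2) h3 hxy hadj
        · have hyM : y ∈ {k : Fin n | i < k ∧ k < j ∧ G.Adj i k} :=
            ⟨lt_trans hik0 h2, h3, hxi ▸ hxy⟩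
          have := hmax y hyM
          simp only [id_eq] at this
          exact absurd h2 (not_lt.mpr this)
        · exact NC i x k0 y hxi h1 h2 hadjik0 hxy
  · -- outside common neighbor
    have hTe' : ¬ {k : Fin n | j < k ∧ G.Adj i k}.Nonempty →
        ∀ k : Fin n, j < k → ¬ G.Adj i k := fun hne k h1 h2 => hne ⟨k, h1, h2⟩
    have hSe' : ¬ {k : Fin n | k < i ∧ G.Adj j k}.Nonempty →
        ∀ k : Fin n, k < i → ¬ G.Adj j k := fun hne k h1 h2 => hne ⟨k, h1, h2⟩
    by_cases hTne : {k : Fin n | j < k ∧ G.Adj i k}.Nonempty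
    · obtain ⟨k0, hk0, hmin⟩ := Set.exists_min_image _ id (Set.toFinite _) hTne
      obtain ⟨hjk0, hadjik0⟩ := hk0
      refine ⟨k0, Or.inr hjk0, hadjik0, ?_⟩
      by_cases h1 : (j:ℕ) + 1 = (k0:ℕ)
      · exact fin_adj_succ hG.1 h1
      · by_cases hadjjk : G.Adj j k0
        · exact hadjjk
        · exfalso
          obtain ⟨x, y, hxy, hc⟩ := mop_sat hn hG hjk0 hadjjk
          rcases hc with ⟨ha1, ha2, ha3⟩ | ⟨ha1, ha2, ha3⟩
          · exact NC i x k0 y (lt_trans hij ha1) ha2 ha3 hadjik0 hxy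
          · rcases lt_trichotomy x i with hxi | hxi | hxi
            · exact NC x i y k0 hxi (lt_trans hij ha2) ha3 hxy hadjik0
            · have hyT : y ∈ {k : Fin n | j < k ∧ G.Adj i k} := ⟨ha2, hxi ▸ hxy⟩
              have := hmin y hyT
              simp only [id_eq] at this
              exact absurd ha3 (not_lt.mpr this)
            · exact NC i x j y hxi ha1 ha2 hadj hxy
    · by_cases hSne : {k : Fin n | k < i ∧ G.Adj j k}.Nonempty
      · obtain ⟨k0, hk0, hmax⟩ := Set.exists_max_image _ id (Set.toFinite _) hSne
        obtain ⟨hk0i, hadjjk0⟩ := hk0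
        refine ⟨k0, Or.inl hk0i, ?_, hadjjk0⟩
        by_cases h1 : (k0:ℕ) + 1 = (i:ℕ)
        · exact (fin_adj_succ hG.1 h1).symm
        · by_cases hadjik : G.Adj k0 i
          · exact hadjik.symm
          · exfalso
            obtain ⟨x, y, hxy, hc⟩ := mop_sat hn hG hk0i hadjik
            rcases hc with ⟨ha1, ha2, ha3⟩ | ⟨ha1, ha2, ha3⟩
            · rcases lt_trichotomy y j with hyj | hyj | hyj
              · exact NC x i y j ha2 ha3 hyj hxy hadj
              · have hxS : x ∈ {k : Fin n | k < i ∧ G.Adj j k} := ⟨ha2, hyj ▸ hxy.symm⟩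
                have := hmax x hxS
                simp only [id_eq] at this
                exact absurd ha1 (not_lt.mpr this)
              · exact NC k0 x j y ha1 (lt_trans ha2 hij) hyj hadjjk0.symm hxy
            · exact NC x k0 y j ha1 ha2 (lt_trans ha3 hij) hxy hadjjk0.symm
      · exfalso
        have hTe := hTe' hTne
        have hSe := hSe' hSne
        rcases hio with hipos | hjlt
        · -- 0 < i
          obtain ⟨d, hd', hdmin⟩ := Set.exists_min_image
            {d : Fin n | d < i ∧ G.Adj i d} id (Set.toFinite _)
            ⟨⟨(i:ℕ)-1, by omega⟩, Fin.lt_def.mpr (show (i:ℕ)-1 < (i:ℕ) by omega),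
              (fin_adj_succ hG.1 (show (i:ℕ)-1+1 = (i:ℕ) by omega)).symm⟩
          obtain ⟨hdi, hadjid⟩ := hd'
          have hnadjdj : ¬ G.Adj d j := fun h => hSe d hdi h.symm
          have hdj : d < j := lt_trans hdi hij
          obtain ⟨x, y, hxy, hc⟩ := mop_sat hn hG hdj hnadjdj
          rcases hc with ⟨ha1, ha2, ha3⟩ | ⟨ha1, ha2, ha3⟩
          · rcases lt_trichotomy x i with hxi | hxi | hxi
            · exact NC d x i y ha1 hxi (lt_trans hij ha3) hadjid.symm hxy
            · exact hTe y ha3 (hxi ▸ hxy)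
            · exact NC i x j y hxi ha2 ha3 hadj hxy
          · rcases lt_trichotomy y i with hyi | hyi | hyi
            · exact NC x d y i ha1 ha2 hyi hxy hadjid.symm
            · have hxD : x ∈ {d : Fin n | d < i ∧ G.Adj i d} :=
                ⟨lt_trans ha1 hdi, hyi ▸ hxy.symm⟩
              have := hdmin x hxD
              simp only [id_eq] at this
              exact absurd ha1 (not_lt.mpr this)
            · exact NC x i y j (lt_trans ha1 hdi) hyi ha3 hxy hadj
        · -- j + 1 < n
          obtain ⟨d, hd', hdmax⟩ := Set.exists_max_image
            {d : Fin n | j < d ∧ G.Adj j d} id (Set.toFinite _)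
            ⟨⟨(j:ℕ)+1, hjlt⟩, Fin.lt_def.mpr (Nat.lt_succ_self _), fin_adj_succ hG.1 rfl⟩
          obtain ⟨hjd, hadjjd⟩ := hd'
          have hnadjid : ¬ G.Adj i d := fun h => hTe d hjd h
          have hid : i < d := lt_trans hij hjd
          obtain ⟨x, y, hxy, hc⟩ := mop_sat hn hG hid hnadjid
          rcases hc with ⟨ha1, ha2, ha3⟩ | ⟨ha1, ha2, ha3⟩
          · rcases lt_trichotomy x j with hxj | hxj | hxj
            · exact NC i x j y ha1 hxj (lt_trans hjd ha3) hadj hxy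
            · have hyD : y ∈ {d : Fin n | j < d ∧ G.Adj j d} :=
                ⟨lt_trans hjd ha3, hxj ▸ hxy⟩
              have := hdmax y hyD
              simp only [id_eq] at this
              exact absurd ha3 (not_lt.mpr this)
            · exact NC j x d y hxj ha2 ha3 hadjjd hxy
          · rcases lt_trichotomy y j with hyj | hyj | hyj
            · exact NC x i y j ha1 ha2 hyj hxy hadj
            · exact hSe x ha1 (hyj ▸ hxy.symm)
            · exact NC x j y d (lt_trans ha1 hij) hyj ha3 hxy hadjjd
end

section
/- Let G be a maximal outerplanar graph of order n ≥ 4 containing no internal triangle, and let {i, j} with i < j be a diagonal of G (so j − i ≥ 2 and (i,j) ≠ (0, n−1)). Then i and j have a common neighbor which is either i+1 or j−1 (i.e., G.Adj (i+1) j or G.Adj (j−1) i), and they also have a common neighbor which is either (j+1) mod n or (i−1) mod n (i.e., G.Adj ((j+1) mod n) i or G.Adj ((i−1) mod n) j). -/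
open SimpleGraph

/-!
A noncrossing graph on `m ≥ 2` points in convex position has at most `2m - 3` edges, by induction:
if the first point `a` has a neighbour before the last point `b`, every edge other than `ab` lies on
one side of the last such neighbour `c`; otherwise `ab` is the only edge at `a`. A mop attains the
bound, so adding any chord creates a crossing, and this forces every diagonal `ij` to close a
triangle `ikj` with `i < k < j`. Unless `k` is `i + 1` or `j - 1`, that triangle is internal.
The other side of the diagonal is the same statement for the polygon rotated so that `j` is `0`.
-/

open Finset

section Noncrossing

variable {α : Type*} [LinearOrder α] {G : SimpleGraph α}

def Noncrossing (G : SimpleGraph α) : Prop :=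
  ∀ a b c d : α, a < b → b < c → c < d → G.Adj a c → ¬ G.Adj b d

def ascEdges (G : SimpleGraph α) [DecidableRel G.Adj] (S : Finset α) : Finset (α × α) :=
  {p ∈ S ×ˢ S | p.1 < p.2 ∧ G.Adj p.1 p.2}

lemma card_filter_le_add_card_filter_ge {S : Finset α} {c : α} (hc : c ∈ S) :
    #{x ∈ S | x ≤ c} + #{x ∈ S | c ≤ x} = #S + 1 := by
  rw [← card_union_add_card_inter, ← filter_or, ← filter_and,
    filter_true_of_mem fun x _ => le_total x c]
  simp only [← le_antisymm_iff, filter_eq', hc, if_true, card_singleton]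

variable [DecidableRel G.Adj]

lemma mem_ascEdges {S : Finset α} {x y : α} :
    (x, y) ∈ ascEdges G S ↔ x ∈ S ∧ y ∈ S ∧ x < y ∧ G.Adj x y := by
  simp [ascEdges, and_assoc]

lemma ascEdges_eq_empty {S : Finset α} (hS : #S ≤ 1) : ascEdges G S = ∅ := by
  refine filter_eq_empty_iff.2 fun p hp h => h.1.ne ?_
  rw [mem_product] at hp
  exact card_le_one.1 hS _ hp.1 _ hp.2

/-- An edge jumping over `c` other than `ab` would cross `ac`. -/
lemma Noncrossing.ascEdges_subset_split (hG : Noncrossing G) {S : Finset α} {a b c : α}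
    (ha : ∀ x ∈ S, a ≤ x) (hb : ∀ x ∈ S, x ≤ b) (hac : G.Adj a c)
    (hc : ∀ x ∈ S, x < b → G.Adj a x → x ≤ c) :
    ascEdges G S ⊆
      ascEdges G {x ∈ S | x ≤ c} ∪ ascEdges G {x ∈ S | c ≤ x} ∪ {(a, b)} := by
  rintro ⟨x, y⟩ hxy
  obtain ⟨hx, hy, hlt, hadj⟩ := mem_ascEdges.1 hxy
  simp only [mem_union, mem_singleton, mem_ascEdges, mem_filter, Prod.mk.injEq]
  by_cases hyc : y ≤ c
  · exact .inl (.inl ⟨⟨hx, hlt.le.trans hyc⟩, ⟨hy, hyc⟩, hlt, hadj⟩)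
  rw [not_le] at hyc
  rcases (ha x hx).eq_or_lt with rfl | hax
  · exact .inr ⟨rfl, (hb y hy).eq_or_lt.resolve_right fun hyb => hyc.not_ge (hc y hy hyb hadj)⟩
  · refine .inl (.inr ⟨⟨hx, not_lt.1 fun hxc => ?_⟩, ⟨hy, hyc.le⟩, hlt, hadj⟩)
    exact hG a x c y hax hxc hyc hac hadj

lemma ascEdges_subset_erase {S : Finset α} {a b : α} (ha : ∀ x ∈ S, a ≤ x)
    (hb : ∀ x ∈ S, x ≤ b) (hab : ∀ x ∈ S, x < b → ¬ G.Adj a x) :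
    ascEdges G S ⊆ ascEdges G (S.erase a) ∪ {(a, b)} := by
  rintro ⟨x, y⟩ hxy
  obtain ⟨hx, hy, hlt, hadj⟩ := mem_ascEdges.1 hxy
  simp only [mem_union, mem_singleton, mem_ascEdges, mem_erase, Prod.mk.injEq]
  rcases eq_or_ne x a with rfl | hxa
  · exact .inr ⟨rfl, (hb y hy).eq_or_lt.resolve_right fun hyb => hab y hy hyb hadj⟩
  · exact .inl ⟨⟨hxa, hx⟩, ⟨(hlt.trans_le' (ha x hx)).ne', hy⟩, hlt, hadj⟩

theorem Noncrossing.card_ascEdges_le (hG : Noncrossing G) (S : Finset α) :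
    #(ascEdges G S) ≤ 2 * #S - 3 := by
  induction S using Finset.strongInduction with
  | H S ih =>
  by_cases hS : #S ≤ 1
  · simp [ascEdges_eq_empty hS]
  have hne : S.Nonempty := card_pos.1 (by omega)
  set a := S.min' hne
  set b := S.max' hne
  have ha : ∀ x ∈ S, a ≤ x := fun x hx => S.min'_le x hx
  have hb : ∀ x ∈ S, x ≤ b := fun x hx => S.le_max' x hx
  by_cases hT : {x ∈ S | x < b ∧ G.Adj a x}.Nonempty
  · obtain ⟨c, hcT, hcmax⟩ := exists_max_image _ id hT
    obtain ⟨hcS, hcb, hac⟩ := mem_filter.1 hcT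
    have hac' : a < c := (ha c hcS).lt_of_ne hac.ne
    have hS₁ : {x ∈ S | x ≤ c} ⊂ S := filter_ssubset.2 ⟨b, S.max'_mem hne, hcb.not_ge⟩
    have hS₂ : {x ∈ S | c ≤ x} ⊂ S := filter_ssubset.2 ⟨a, S.min'_mem hne, hac'.not_ge⟩
    have h₁ : 1 < #{x ∈ S | x ≤ c} := one_lt_card.2
      ⟨a, mem_filter.2 ⟨S.min'_mem hne, hac'.le⟩, c, mem_filter.2 ⟨hcS, le_rfl⟩,
        hac'.ne⟩
    have h₂ : 1 < #{x ∈ S | c ≤ x} := one_lt_card.2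
      ⟨c, mem_filter.2 ⟨hcS, le_rfl⟩, b, mem_filter.2 ⟨S.max'_mem hne, hcb.le⟩, hcb.ne⟩
    have hsplit := hG.ascEdges_subset_split ha hb hac
      fun x hx hxb hax => hcmax x (mem_filter.2 ⟨hx, hxb, hax⟩)
    calc #(ascEdges G S)
        ≤ (2 * #{x ∈ S | x ≤ c} - 3) + (2 * #{x ∈ S | c ≤ x} - 3) + 1 := by
          grw [hsplit, card_union_le, card_union_le, ih _ hS₁, ih _ hS₂, card_singleton]
      _ = 2 * #S - 3 := by have := card_filter_le_add_card_filter_ge hcS; omega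
  · have herase := ascEdges_subset_erase ha hb fun x hx hxb hax =>
      hT ⟨x, mem_filter.2 ⟨hx, hxb, hax⟩⟩
    calc #(ascEdges G S)
        ≤ (2 * #(S.erase a) - 3) + 1 := by
          grw [herase, card_union_le, ih _ (erase_ssubset (S.min'_mem hne)), card_singleton]
      _ ≤ 2 * #S - 3 := by rw [card_erase_of_mem (S.min'_mem hne)]; omega

omit [DecidableRel G.Adj] in
theorem Noncrossing.ncard_edgeSet_le [Fintype α] (hG : Noncrossing G) :
    G.edgeSet.ncard ≤ 2 * Fintype.card α - 3 := by
  classical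
  have hedges : G.edgeSet = (fun p : α × α => s(p.1, p.2)) '' ascEdges G univ := by
    ext e
    induction e using Sym2.ind with
    | h x y =>
    simp only [mem_edgeSet, Set.mem_image, mem_coe, Prod.exists, mem_ascEdges, mem_univ, true_and]
    refine ⟨fun h => ?_, ?_⟩
    · rcases h.ne.lt_or_gt with hxy | hyx
      · exact ⟨x, y, ⟨hxy, h⟩, rfl⟩
      · exact ⟨y, x, ⟨hyx, h.symm⟩, Sym2.eq_swap⟩
    · rintro ⟨u, v, ⟨-, huv⟩, he⟩
      rcases Sym2.eq_iff.1 he with ⟨rfl, rfl⟩ | ⟨rfl, rfl⟩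
      exacts [huv, huv.symm]
  have hinj : Set.InjOn (fun p : α × α => s(p.1, p.2)) (ascEdges G univ) := by
    rintro ⟨x, y⟩ hxy ⟨u, v⟩ huv he
    have hxy := (mem_ascEdges.1 hxy).2.2.1
    have huv := (mem_ascEdges.1 huv).2.2.1
    rcases Sym2.eq_iff.1 he with ⟨rfl, rfl⟩ | ⟨rfl, rfl⟩
    · rfl
    · exact (hxy.asymm huv).elim
  rw [hedges, hinj.ncard_image, Set.ncard_coe_finset, ← card_univ]
  exact hG.card_ascEdges_le univ

omit [DecidableRel G.Adj] in
/-- Adding the chord `uv` would exceed the bound `2 |α| - 3`. -/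
theorem Noncrossing.exists_crossing_of_not_adj [Fintype α] (hG : Noncrossing G)
    (hcard : G.edgeSet.ncard = 2 * Fintype.card α - 3) {u v : α} (huv : u < v)
    (hnadj : ¬ G.Adj u v) :
    ∃ x y, G.Adj x y ∧ (u < x ∧ x < v ∧ v < y ∨ x < u ∧ u < y ∧ y < v) := by
  have hsup : (G ⊔ edge u v).edgeSet.ncard = G.edgeSet.ncard + 1 := by
    rw [edgeSet_sup, edgeSet_edge_of_ne huv.ne,
      Set.ncard_union_eq (Set.disjoint_singleton_right.2 (mem_edgeSet G |>.not.2 hnadj)),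
      Set.ncard_singleton]
  have hcross : ¬ Noncrossing (G ⊔ edge u v) := fun h => by
    have := h.ncard_edgeSet_le
    have := Fintype.one_lt_card_iff.2 ⟨u, v, huv.ne⟩
    omega
  simp only [Noncrossing, not_forall, not_not] at hcross
  obtain ⟨a, b, c, d, hab, hbc, hcd, hac, hbd⟩ := hcross
  rw [sup_adj, edge_adj] at hac hbd
  rcases hac with hac | ⟨⟨rfl, rfl⟩ | ⟨rfl, rfl⟩, -⟩ <;>
    rcases hbd with hbd | ⟨⟨rfl, rfl⟩ | ⟨rfl, rfl⟩, -⟩ <;>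
    first
    | exact (hG a b c d hab hbc hcd hac hbd).elim
    | exact ⟨_, _, hbd, .inl ⟨hab, hbc, hcd⟩⟩
    | exact ⟨_, _, hac, .inr ⟨hab, hbc, hcd⟩⟩
    | (exfalso; order)

omit [DecidableRel G.Adj] in
/-- The last neighbour `m` of `i` before `j` is adjacent to `j`: otherwise the chord `mj` crosses
an edge `xy`, which then crosses `ij` or `im`, or leaves `i` beyond `m`. -/
theorem Noncrossing.exists_common_neighbor_between [Fintype α] (hG : Noncrossing G)
    (hcard : G.edgeSet.ncard = 2 * Fintype.card α - 3) {i j k : α} (hij : G.Adj i j)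
    (hik : G.Adj i k) (hik' : i < k) (hkj : k < j) :
    ∃ m, i < m ∧ m < j ∧ G.Adj i m ∧ G.Adj m j := by
  classical
  obtain ⟨m, hmT, hmax⟩ := exists_max_image {x | i < x ∧ x < j ∧ G.Adj i x} id
    ⟨k, mem_filter.2 ⟨mem_univ k, hik', hkj, hik⟩⟩
  obtain ⟨-, him, hmj, him'⟩ := mem_filter.1 hmT
  refine ⟨m, him, hmj, him', ?_⟩
  by_contra hmj'
  obtain ⟨x, y, hxy, ⟨hmx, hxj, hjy⟩ | ⟨hxm, hmy, hyj⟩⟩ :=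
    hG.exists_crossing_of_not_adj hcard hmj hmj'
  · exact hG i x j y (him.trans hmx) hxj hjy hij hxy
  · rcases lt_trichotomy x i with hxi | rfl | hix
    · exact hG x i y j hxi (him.trans hmy) hyj hxy hij
    · exact hmy.not_ge (hmax y (mem_filter.2 ⟨mem_univ y, him.trans hmy, hyj, hxy⟩))
    · exact hG i x m y hix hxm hmy him' hxy

end Noncrossing

section Polygon

variable {n : ℕ} {G : SimpleGraph (Fin n)}

/-- Rotating four points by `r` turns their increasing order into a cyclic shift of it, and a
cyclic shift of a crossing pair of chords still crosses. -/
theorem Noncrossing.comap_add (hG : Noncrossing G) (r : Fin n) :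
    Noncrossing (G.comap (· + r)) := by
  intro a b c d hab hbc hcd hac hbd
  simp only [comap_adj] at hac hbd
  rw [Fin.lt_def] at hab hbc hcd
  have ha := Fin.val_add_eq_ite a r
  have hb := Fin.val_add_eq_ite b r
  have hc := Fin.val_add_eq_ite c r
  have hd := Fin.val_add_eq_ite d r
  split_ifs at ha hb hc hd <;>
    first
    | omega
    | exact hG (a + r) (b + r) (c + r) (d + r) (by omega) (by omega) (by omega) hac hbd
    | exact hG (d + r) (a + r) (b + r) (c + r) (by omega) (by omega) (by omega) hbd.symm hac
    | exact hG (c + r) (d + r) (a + r) (b + r) (by omega) (by omega) (by omega) hac.symm hbd.symm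
    | exact hG (b + r) (c + r) (d + r) (a + r) (by omega) (by omega) (by omega) hbd hac.symm

variable [NeZero n]

theorem IsMop.noncrossing (hG : IsMop G) : Noncrossing G := hG.2.1

theorem IsMop.comap_add (hG : IsMop G) (r : Fin n) : IsMop (G.comap (· + r)) := by
  refine ⟨fun i => ?_, hG.noncrossing.comap_add r, ?_⟩
  · simpa only [comap_adj, add_right_comm i 1 r] using hG.1 (i + r)
  · rw [← hG.2.2]
    exact Nat.card_congr (Iso.comap (Equiv.addRight r) G).mapEdgeSet

theorem IsDiagonal.symm {u v : Fin n} (h : IsDiagonal G u v) : IsDiagonal G v u :=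
  ⟨h.1.symm, h.2.2, h.2.1⟩

theorem isDiagonal_comap_add_iff {u v r : Fin n} :
    IsDiagonal (G.comap (· + r)) u v ↔ IsDiagonal G (u + r) (v + r) := by
  simp only [IsDiagonal, comap_adj, add_right_comm _ r (1 : Fin n), ne_eq, add_left_inj]

theorem isInternalTriangle_comap_add_iff {a b c r : Fin n} :
    IsInternalTriangle (G.comap (· + r)) a b c ↔
      IsInternalTriangle G (a + r) (b + r) (c + r) := by
  simp only [IsInternalTriangle, isDiagonal_comap_add_iff]

theorem IsMop.adj_add_one_or_adj_sub_one (hG : IsMop G)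
    (hno : ∀ a b c : Fin n, ¬ IsInternalTriangle G a b c) {i j : Fin n} (hij : i < j)
    (hd : IsDiagonal G i j) : G.Adj (i + 1) j ∨ G.Adj (j - 1) i := by
  obtain ⟨hadj, hj, hi⟩ := hd
  rw [Fin.lt_def] at hij
  have hi1 : ((i + 1 : Fin n) : ℕ) = i + 1 := Fin.val_add_one_of_lt' (by omega)
  obtain ⟨k, hik, hkj, hik', hkj'⟩ := hG.noncrossing.exists_common_neighbor_between
    (by simpa using hG.2.2) hadj (hG.1 i) (by omega) (by omega)
  rw [Fin.lt_def] at hik hkj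
  have hk1 : ((k + 1 : Fin n) : ℕ) = k + 1 := Fin.val_add_one_of_lt' (by omega)
  by_contra! h
  refine hno i k j ⟨⟨hik', fun e => h.1 (e ▸ hkj'), ?_⟩, ⟨hkj', ?_, ?_⟩, hadj, hj, hi⟩
  · rw [ne_eq, Fin.ext_iff, hk1]
    omega
  · exact fun e => h.2 (by rwa [e, add_sub_cancel_right, adj_comm])
  · have := j.isLt
    rw [ne_eq, Fin.ext_iff, Fin.val_add_eq_ite, Fin.val_one', Nat.mod_eq_of_lt (by omega)]
    split_ifs <;> omega

end Polygon

theorem mop_no_internal_triangle_diagonal_common_neighbors_general {n : ℕ} [NeZero n]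
    (G : SimpleGraph (Fin n)) (hG : IsMop G)
    (hno : ∀ a b c : Fin n, ¬ IsInternalTriangle G a b c)
    (i j : Fin n) (hij : i < j) (hd : IsDiagonal G i j) :
    (G.Adj (i + 1) j ∨ G.Adj (j - 1) i) ∧ (G.Adj (j + 1) i ∨ G.Adj (i - 1) j) := by
  refine ⟨hG.adj_add_one_or_adj_sub_one hno hij hd, ?_⟩
  have hno' : ∀ a b c : Fin n, ¬ IsInternalTriangle (G.comap (· + j)) a b c :=
    fun a b c h => hno _ _ _ (isInternalTriangle_comap_add_iff.1 h)
  have hd' : IsDiagonal (G.comap (· + j)) 0 (i - j) :=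
    isDiagonal_comap_add_iff.2 (by simpa using hd.symm)
  have hpos : 0 < i - j := (Fin.pos_iff_ne_zero' _).2 (sub_ne_zero.2 hij.ne)
  simpa only [comap_adj, zero_add, sub_add_cancel, add_comm 1 j, sub_right_comm i j 1] using
    (hG.comap_add j).adj_add_one_or_adj_sub_one hno' hpos hd'

theorem mop_no_internal_triangle_diagonal_common_neighbors {n : ℕ} [NeZero n]
    (G : SimpleGraph (Fin n)) (hn : 4 ≤ n) (hG : IsMop G)
    (hno : ∀ a b c : Fin n, ¬ IsInternalTriangle G a b c)
    (i j : Fin n) (hij : i < j) (hd : IsDiagonal G i j) :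
    (G.Adj (i + 1) j ∨ G.Adj (j - 1) i) ∧ (G.Adj (j + 1) i ∨ G.Adj (i - 1) j) :=
  mop_no_internal_triangle_diagonal_common_neighbors_general G hG hno i j hij hd
end

section
/- If G is a maximal outerplanar graph of order 11, then the set {0, 4, 8} is a disjunctive dominating set of G; in particular γ₂ᵈ(G) ≤ 3. -/
open SimpleGraph

private lemma dist_two_aux (G : SimpleGraph (Fin 11)) (u w v : Fin 11)
    (h1 : G.Adj u w) (h2 : G.Adj w v) (hne : u ≠ v) (hna : ¬ G.Adj u v) :
    G.dist u v = 2 := by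
  have hle : G.dist u v ≤ 2 :=
    SimpleGraph.dist_le (SimpleGraph.Walk.cons h1 (SimpleGraph.Walk.cons h2 SimpleGraph.Walk.nil))
  have hr : G.Reachable u v := ⟨SimpleGraph.Walk.cons h1 (SimpleGraph.Walk.cons h2 SimpleGraph.Walk.nil)⟩
  have h0 : G.dist u v ≠ 0 := fun h => hne (hr.dist_eq_zero_iff.mp h)
  have h1' : G.dist u v ≠ 1 := fun h => hna (SimpleGraph.dist_eq_one_iff_adj.mp h)
  omega

theorem mop_eleven_disjDom (G : SimpleGraph (Fin 11)) (hG : IsMop G) :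
    IsDisjDomSet G {0, 4, 8} ∧ disjDomNum G ≤ 3 := by
  obtain ⟨hcyc, -, -⟩ := hG
  have hdd : IsDisjDomSet G {0, 4, 8} := by
    intro v hv
    have mem0 : (0 : Fin 11) ∈ ({0, 4, 8} : Set (Fin 11)) := by simp
    have mem4 : (4 : Fin 11) ∈ ({0, 4, 8} : Set (Fin 11)) := by simp
    have mem8 : (8 : Fin 11) ∈ ({0, 4, 8} : Set (Fin 11)) := by simp
    fin_cases v
    · exact absurd mem0 hv
    · exact Or.inl ⟨0, mem0, by simpa using hcyc 0⟩
    · -- v = 2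
      by_cases h02 : G.Adj 0 2
      · exact Or.inl ⟨0, mem0, h02⟩
      by_cases h42 : G.Adj 4 2
      · exact Or.inl ⟨4, mem4, h42⟩
      refine Or.inr ⟨0, mem0, 4, mem4, by decide, ?_, ?_⟩
      · exact dist_two_aux G 0 1 2 (by simpa using hcyc 0) (by simpa using hcyc 1) (by decide) h02
      · exact dist_two_aux G 4 3 2 (by simpa using (hcyc 3).symm) (by simpa using (hcyc 2).symm) (by decide) h42
    · exact Or.inl ⟨4, mem4, by simpa using (hcyc 3).symm⟩
    · exact absurd mem4 hv
    · exact Or.inl ⟨4, mem4, by simpa using hcyc 4⟩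
    · -- v = 6
      by_cases h46 : G.Adj 4 6
      · exact Or.inl ⟨4, mem4, h46⟩
      by_cases h86 : G.Adj 8 6
      · exact Or.inl ⟨8, mem8, h86⟩
      refine Or.inr ⟨4, mem4, 8, mem8, by decide, ?_, ?_⟩
      · exact dist_two_aux G 4 5 6 (by simpa using hcyc 4) (by simpa using hcyc 5) (by decide) h46
      · exact dist_two_aux G 8 7 6 (by simpa using (hcyc 7).symm) (by simpa using (hcyc 6).symm) (by decide) h86
    · exact Or.inl ⟨8, mem8, by simpa using (hcyc 7).symm⟩
    · exact absurd mem8 hv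
    · exact Or.inl ⟨8, mem8, by simpa using hcyc 8⟩
    · exact Or.inl ⟨0, mem0, by simpa using (hcyc 10).symm⟩
  refine ⟨hdd, ?_⟩
  have hcard : ({0, 4, 8} : Set (Fin 11)).ncard = 3 :=
    Set.ncard_eq_three.mpr ⟨0, 4, 8, by decide, by decide, by decide, rfl⟩
  exact Nat.sInf_le ⟨{0, 4, 8}, hdd, hcard⟩
end

section
/- If G is a maximal outerplanar graph of order 12, then the set {0, 4, 8} is a disjunctive dominating set of G; in particular γ₂ᵈ(G) ≤ 3. -/
open SimpleGraph

private lemma dist_two {V : Type*} (G : SimpleGraph V) {u v w : V}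
    (h1 : G.Adj u w) (h2 : G.Adj w v) (hne : u ≠ v) (hna : ¬ G.Adj u v) :
    G.dist u v = 2 := by
  have hle : G.dist u v ≤ 2 := by
    have := SimpleGraph.dist_le (SimpleGraph.Walk.cons h1 (SimpleGraph.Walk.cons h2 SimpleGraph.Walk.nil))
    simpa using this
  have h0 : G.dist u v ≠ 0 := by
    rw [ne_eq, SimpleGraph.dist_eq_zero_iff_eq_or_not_reachable]
    push_neg
    exact ⟨hne, ⟨SimpleGraph.Walk.cons h1 (SimpleGraph.Walk.cons h2 SimpleGraph.Walk.nil)⟩⟩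
  have h1' : G.dist u v ≠ 1 := fun h => hna (SimpleGraph.dist_eq_one_iff_adj.mp h)
  omega

theorem mop_twelve_disjDom (G : SimpleGraph (Fin 12)) (hG : IsMop G) :
    IsDisjDomSet G {0, 4, 8} ∧ disjDomNum G ≤ 3 := by
  have h : ∀ i : Fin 12, G.Adj i (i + 1) := hG.1
  have h0 : G.Adj 0 1 := by have := h 0; simpa using this
  have h1 : G.Adj 1 2 := by have := h 1; simpa using this
  have h2 : G.Adj 2 3 := by have := h 2; simpa using this
  have h3 : G.Adj 3 4 := by have := h 3; simpa using this
  have h4 : G.Adj 4 5 := by have := h 4; simpa using this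
  have h5 : G.Adj 5 6 := by have := h 5; simpa using this
  have h6 : G.Adj 6 7 := by have := h 6; simpa using this
  have h7 : G.Adj 7 8 := by have := h 7; simpa using this
  have h8 : G.Adj 8 9 := by have := h 8; simpa using this
  have h9 : G.Adj 9 10 := by have := h 9; simpa using this
  have h10 : G.Adj 10 11 := by have := h 10; simpa using this
  have h11 : G.Adj 11 0 := by have := h 11; simpa using this
  have hdd : IsDisjDomSet G {0, 4, 8} := by
    intro v hv
    simp only [Set.mem_insert_iff, Set.mem_singleton_iff] at hv
    push_neg at hv
    fin_cases v
    · exact absurd rfl hv.1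
    · exact Or.inl ⟨0, by simp, h0⟩
    · by_cases ha : G.Adj 0 2
      · exact Or.inl ⟨0, by simp, ha⟩
      · by_cases hb : G.Adj 4 2
        · exact Or.inl ⟨4, by simp, hb⟩
        · exact Or.inr ⟨0, by simp, 4, by simp, by decide,
            dist_two G h0 h1 (by decide) ha, dist_two G h3.symm h2.symm (by decide) hb⟩
    · exact Or.inl ⟨4, by simp, h3.symm⟩
    · exact absurd rfl hv.2.1
    · exact Or.inl ⟨4, by simp, h4⟩
    · by_cases ha : G.Adj 4 6
      · exact Or.inl ⟨4, by simp, ha⟩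
      · by_cases hb : G.Adj 8 6
        · exact Or.inl ⟨8, by simp, hb⟩
        · exact Or.inr ⟨4, by simp, 8, by simp, by decide,
            dist_two G h4 h5 (by decide) ha, dist_two G h7.symm h6.symm (by decide) hb⟩
    · exact Or.inl ⟨8, by simp, h7.symm⟩
    · exact absurd rfl hv.2.2
    · exact Or.inl ⟨8, by simp, h8⟩
    · by_cases ha : G.Adj 8 10
      · exact Or.inl ⟨8, by simp, ha⟩
      · by_cases hb : G.Adj 0 10
        · exact Or.inl ⟨0, by simp, hb⟩
        · exact Or.inr ⟨8, by simp, 0, by simp, by decide,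
            dist_two G h8 h9 (by decide) ha, dist_two G h11.symm h10.symm (by decide) hb⟩
    · exact Or.inl ⟨0, by simp, h11.symm⟩
  refine ⟨hdd, ?_⟩
  apply Nat.sInf_le
  refine ⟨{0, 4, 8}, hdd, ?_⟩
  rw [Set.ncard_eq_toFinset_card']
  decide
end

section
/- If G is a maximal outerplanar graph of order n ≥ 4 and k is the number of vertices of G having degree 2, then γ₂ᵈ(G) ≤ γ(G) ≤ ⌊(n+k)/4⌋. -/
open SimpleGraph

/-!
Colour the vertices with four colours so that every closed neighbourhood meets all four
colours, a vertex of degree two carrying at most two colours and every other vertex one. Each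
colour class is then a dominating set, and the colour classes have at most `n + k` elements in
total, so one of them has at most `(n + k) / 4`. A dominating set is disjunctive dominating.

The vertices are moved to `ℕ`, where the polygon cut off by a chord `ab` is the interval
`[a, b]`. Since `G` has `2n - 3` edges, the polygon has the maximal number of chords, and so
does every polygon cut off by a chord: it splits at the apex `z` of the triangle on its base
`ab` into the polygons over `az` and `zb`. The colouring is built along this recursion, with
`a` and `b` already coloured: `z` gets a third colour and sees the fourth one on a side that is
not a single edge, while the middle vertex of a triangle `a, a + 1, a + 2` is an ear and takes
both missing colours.
-/

open Finset
open scoped Classical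

section general

variable {V W α : Type*}

def SeesColor (G : SimpleGraph V) (f : V → Finset α) (v : V) (c : α) : Prop :=
  ∃ u, (u = v ∨ G.Adj v u) ∧ c ∈ f u

theorem SeesColor.mono {G : SimpleGraph V} {f g : V → Finset α} {v : V} {c : α}
    (h : SeesColor G f v c) (hfg : f ≤ g) : SeesColor G g v c :=
  let ⟨u, hu, hc⟩ := h; ⟨u, hu, hfg u hc⟩

theorem SeesColor.of_triangle {G : SimpleGraph V} {f : V → Finset α} {x y z : V} {c : α}
    (hxy : G.Adj x y) (hyz : G.Adj y z) (hxz : G.Adj x z) (hc : c ∈ f x ∨ c ∈ f y ∨ c ∈ f z) :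
    SeesColor G f x c ∧ SeesColor G f y c ∧ SeesColor G f z c := by
  rcases hc with hc | hc | hc
  · exact ⟨⟨x, Or.inl rfl, hc⟩, ⟨x, Or.inr hxy.symm, hc⟩, ⟨x, Or.inr hxz.symm, hc⟩⟩
  · exact ⟨⟨y, Or.inr hxy, hc⟩, ⟨y, Or.inl rfl, hc⟩, ⟨y, Or.inr hyz.symm, hc⟩⟩
  · exact ⟨⟨z, Or.inr hxz, hc⟩, ⟨z, Or.inr hyz, hc⟩, ⟨z, Or.inl rfl, hc⟩⟩

theorem SeesColor.of_map {G : SimpleGraph V} {e : V ↪ W} {F : W → Finset α} {v : V} {c : α}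
    (h : SeesColor (G.map e) F (e v) c) : SeesColor G (F ∘ e) v c := by
  obtain ⟨u, hu | hu, hc⟩ := h
  · subst hu
    exact ⟨v, Or.inl rfl, hc⟩
  · obtain ⟨v', u', hadj, hv, rfl⟩ := (SimpleGraph.map_adj _ _ _ _).1 hu
    exact ⟨u', Or.inr (e.injective hv ▸ hadj), hc⟩

noncomputable def capacity (G : SimpleGraph V) (v : V) : ℕ :=
  if (G.neighborSet v).ncard = 2 then 2 else 1

theorem one_le_capacity (G : SimpleGraph V) (v : V) : 1 ≤ capacity G v := by
  unfold capacity; split_ifs <;> omega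

theorem capacity_map (G : SimpleGraph V) (e : V ↪ W) (v : V) :
    capacity (G.map e) (e v) = capacity G v := by
  rw [capacity, capacity, SimpleGraph.neighborSet_map, Set.ncard_image_of_injective _ e.injective]

theorem SimpleGraph.ncard_neighborSet_eq_two {G : SimpleGraph V} {v x y : V} (hx : G.Adj v x)
    (hy : G.Adj v y) (hxy : x ≠ y) (h : ∀ u, G.Adj v u → u = x ∨ u = y) :
    (G.neighborSet v).ncard = 2 := by
  have : G.neighborSet v = {x, y} := by
    ext u
    refine ⟨h u, ?_⟩
    rintro (rfl | rfl) <;> assumption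
  rw [this, Set.ncard_pair hxy]

theorem SimpleGraph.ncard_edgeSet_eq_ncard_lt [LinearOrder V] (G : SimpleGraph V) :
    G.edgeSet.ncard = {p : V × V | p.1 < p.2 ∧ G.Adj p.1 p.2}.ncard := by
  have : G.edgeSet = (fun p : V × V ↦ s(p.1, p.2)) '' {p | p.1 < p.2 ∧ G.Adj p.1 p.2} := by
    ext e
    induction e using Sym2.ind with
    | _ x y =>
    simp only [SimpleGraph.mem_edgeSet, Set.mem_image, Set.mem_ofPred_eq, Prod.exists]
    constructor
    · intro h
      rcases lt_trichotomy x y with hxy | rfl | hxy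
      · exact ⟨x, y, ⟨hxy, h⟩, rfl⟩
      · exact absurd h (G.irrefl)
      · exact ⟨y, x, ⟨hxy, h.symm⟩, Sym2.eq_swap⟩
    · rintro ⟨u, w, ⟨-, h⟩, he⟩
      rwa [← SimpleGraph.mem_edgeSet, ← he]
  rw [this, Set.InjOn.ncard_image]
  rintro ⟨a, b⟩ ⟨hab, -⟩ ⟨c, d⟩ ⟨hcd, -⟩ h
  rcases Sym2.eq_iff.1 h with ⟨rfl, rfl⟩ | ⟨rfl, rfl⟩
  · rfl
  · exact absurd (hab.trans hcd) (lt_irrefl _)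

theorem exists_isDomSet_card_mul_le [Fintype V] [Fintype α] [Nonempty α]
    {G : SimpleGraph V} {F : V → Finset α} (hF : ∀ v c, SeesColor G F v c) :
    ∃ D : Set V, IsDomSet G D ∧ Fintype.card α * D.ncard ≤ ∑ v, #(F v) := by
  have hsum : ∑ c, #{v | c ∈ F v} = ∑ v, #(F v) := by
    simpa [bipartiteAbove, bipartiteBelow] using
      sum_card_bipartiteAbove_eq_sum_card_bipartiteBelow (s := univ) (t := univ)
        (r := fun c v ↦ c ∈ F v)
  obtain ⟨c, -, hc⟩ := exists_le_of_sum_le (s := univ)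
    (f := fun c ↦ Fintype.card α * #{v | c ∈ F v}) (g := fun _ ↦ ∑ v, #(F v)) univ_nonempty
    (by simp [← mul_sum, hsum])
  refine ⟨{v | c ∈ F v}, fun v hv ↦ ?_, by simpa [Set.ncard_eq_toFinset_card'] using hc⟩
  obtain ⟨u, hu | hu, hcu⟩ := hF v c
  · exact absurd (hu ▸ hcu) hv
  · exact ⟨u, hcu, hu.symm⟩

theorem IsDomSet.isDisjDomSet {G : SimpleGraph V} {D : Set V} (h : IsDomSet G D) :
    IsDisjDomSet G D :=
  fun v hv ↦ Or.inl (h v hv)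

theorem disjDomNum_le_domNum [Fintype V] (G : SimpleGraph V) :
    disjDomNum G ≤ domNum G := by
  obtain ⟨D, hD, hcard⟩ : domNum G ∈ {k | ∃ D : Set V, IsDomSet G D ∧ D.ncard = k} :=
    Nat.sInf_mem ⟨_, Set.univ, fun v hv ↦ absurd (Set.mem_univ v) hv, rfl⟩
  exact hcard ▸ Nat.sInf_le ⟨D, hD.isDisjDomSet, rfl⟩

theorem card_erase_sdiff_le [DecidableEq α] {s t u : Finset α} {x : α} (h : u ⊆ insert x t) :
    #(s.erase x \ t) ≤ #(s \ u) :=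
  card_le_card fun c hc ↦ by
    simp only [mem_sdiff, mem_erase] at hc ⊢
    exact ⟨hc.1.2, fun hu ↦ (mem_insert.1 (h hu)).elim hc.1.1 hc.2⟩

theorem sum_capacity {n : ℕ} (G : SimpleGraph (Fin n)) : ∑ v, capacity G v = n + degTwoCount G := by
  have : ∀ v, capacity G v = 1 + if (G.neighborSet v).ncard = 2 then 1 else 0 := by
    intro v; unfold capacity; split_ifs <;> rfl
  simp [this, sum_add_distrib, degTwoCount, Set.ncard_eq_toFinset_card']

end general

variable {H : SimpleGraph ℕ} {n a b z : ℕ}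

def NonCrossing (H : SimpleGraph ℕ) : Prop :=
  ∀ ⦃a b c d⦄, a < b → b < c → c < d → H.Adj a c → ¬ H.Adj b d

structure IsOuterplanarOn (n : ℕ) (H : SimpleGraph ℕ) : Prop where
  adj_succ : ∀ i, i + 1 < n → H.Adj i (i + 1)
  nonCrossing : NonCrossing H

theorem NonCrossing.mem_Icc_of_adj (hH : NonCrossing H) {v u : ℕ} (hab : H.Adj a b)
    (hav : a < v) (hvb : v < b) (hvu : H.Adj v u) : u ∈ Set.Icc a b := by
  constructor
  · by_contra! hua
    exact hH hua hav hvb hvu.symm hab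
  · by_contra! hbu
    exact hH hav hvb hbu hab hvu

/-- The chords of the polygon `a, a + 1, …, b`, including `(a, b)` when it is an edge. -/
noncomputable def chords (H : SimpleGraph ℕ) (a b : ℕ) : Finset (ℕ × ℕ) :=
  {p ∈ Icc a b ×ˢ Icc a b | p.1 + 2 ≤ p.2 ∧ H.Adj p.1 p.2}

theorem mem_chords {x y : ℕ} :
    (x, y) ∈ chords H a b ↔ a ≤ x ∧ x + 2 ≤ y ∧ y ≤ b ∧ H.Adj x y := by
  simp only [chords, mem_filter, mem_product, mem_Icc]
  constructor
  · rintro ⟨⟨⟨h₁, -⟩, -, h₂⟩, h₃, h₄⟩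
    exact ⟨h₁, h₃, h₂, h₄⟩
  · rintro ⟨h₁, h₂, h₃, h₄⟩
    exact ⟨⟨⟨h₁, by omega⟩, by omega, h₃⟩, h₂, h₄⟩

/-- When the polygon `a, …, b` is triangulated, the third vertex of the triangle on `ab`. -/
noncomputable def apex (H : SimpleGraph ℕ) (a b : ℕ) : ℕ := Nat.findGreatest (H.Adj a) (b - 1)

theorem lt_apex (ha : H.Adj a (a + 1)) (hab : a + 2 ≤ b) : a < apex H a b :=
  Nat.le_findGreatest (by omega) ha

theorem apex_lt (hb : 0 < b) : apex H a b < b := by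
  have := Nat.findGreatest_le (P := H.Adj a) (b - 1)
  rw [apex]; omega

theorem adj_apex (ha : H.Adj a (a + 1)) (hab : a + 2 ≤ b) : H.Adj a (apex H a b) :=
  Nat.findGreatest_spec (by omega) ha

theorem not_adj_of_apex_lt {u : ℕ} (hu : apex H a b < u) (hub : u < b) : ¬ H.Adj a u :=
  Nat.findGreatest_is_greatest hu (by omega)

theorem card_chords_le_apex (hH : NonCrossing H) (ha : H.Adj a (a + 1)) (hab : a + 2 ≤ b) :
    #(chords H a b) ≤
      #(chords H a (apex H a b)) + #(chords H (apex H a b) b) + if H.Adj a b then 1 else 0 := by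
  set z := apex H a b
  have hsub : chords H a b ⊆
      chords H a z ∪ chords H z b ∪ if H.Adj a b then {(a, b)} else ∅ := by
    rintro ⟨x, y⟩ hxy
    obtain ⟨hax, hxy', hyb, hadj⟩ := mem_chords.1 hxy
    simp only [mem_union, mem_chords]
    by_cases hyz : y ≤ z
    · exact Or.inl (Or.inl ⟨hax, hxy', hyz, hadj⟩)
    rcases hax.eq_or_lt with rfl | hax
    · have hyb : y = b := by
        by_contra hyb
        exact not_adj_of_apex_lt (b := b) (by omega) (by omega) hadj
      subst hyb
      right; simp [hadj]
    · have hzx : z ≤ x := by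
        by_contra! hxz
        exact hH hax hxz (by omega) (adj_apex ha hab) hadj
      exact Or.inl (Or.inr ⟨hzx, hxy', hyb, hadj⟩)
  refine (card_le_card hsub).trans ((card_union_le _ _).trans (add_le_add (card_union_le _ _) ?_))
  split_ifs <;> simp

theorem IsOuterplanarOn.card_chords_le (hH : IsOuterplanarOn n H) (hb : b < n) :
    #(chords H a b) ≤ b - a - 1 := by
  induction h : b - a using Nat.strong_induction_on generalizing a b with
  | _ d ih =>
  by_cases hab : a + 2 ≤ b
  · have ha := hH.adj_succ a (by omega)
    have h₁ := lt_apex ha hab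
    have h₂ : apex H a b < b := apex_lt (by omega)
    have := card_chords_le_apex hH.nonCrossing ha hab
    have := ih _ (by omega) (a := a) (b := apex H a b) (by omega) rfl
    have := ih _ (by omega) (a := apex H a b) hb rfl
    split_ifs at * <;> omega
  · have : chords H a b = ∅ := by
      ext ⟨x, y⟩
      simp only [mem_chords, notMem_empty, iff_false]
      omega
    simp [this]

/-- The polygon `a, …, b` is triangulated: it has the maximal number of chords. -/
def HasMaxChords (H : SimpleGraph ℕ) (a b : ℕ) : Prop := #(chords H a b) = b - a - 1

theorem HasMaxChords.split (hH : IsOuterplanarOn n H) (hb : b < n) (hab : a + 2 ≤ b)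
    (h : HasMaxChords H a b) :
    H.Adj a b ∧ HasMaxChords H a (apex H a b) ∧ HasMaxChords H (apex H a b) b := by
  have ha := hH.adj_succ a (by omega)
  have h₁ := lt_apex ha hab
  have h₂ : apex H a b < b := apex_lt (by omega)
  have := card_chords_le_apex hH.nonCrossing ha hab
  have := hH.card_chords_le (a := a) (b := apex H a b) (by omega)
  have := hH.card_chords_le (a := apex H a b) hb
  unfold HasMaxChords at *
  split_ifs at * with hadj
  · exact ⟨hadj, by omega, by omega⟩
  · omega

theorem HasMaxChords.adj (hH : IsOuterplanarOn n H) (hb : b < n) (hab : a < b)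
    (h : HasMaxChords H a b) : H.Adj a b := by
  by_cases hab : a + 2 ≤ b
  · exact (h.split hH hb hab).1
  · obtain rfl : b = a + 1 := by omega
    exact hH.adj_succ a hb

theorem IsOuterplanarOn.hasMaxChords (hH : IsOuterplanarOn n H)
    (hlt : ∀ ⦃i j⦄, H.Adj i j → i < n) (hE : H.edgeSet.ncard = 2 * n - 3) (hn : 2 ≤ n) :
    HasMaxChords H 0 (n - 1) := by
  set sides := (range (n - 1)).image fun i ↦ (i, i + 1)
  have hsides : #sides = n - 1 :=
    (card_image_of_injective _ fun i j h ↦ (Prod.mk.inj h).1).trans (card_range _)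
  have hpairs : {p : ℕ × ℕ | p.1 < p.2 ∧ H.Adj p.1 p.2} = ↑(sides ∪ chords H 0 (n - 1)) := by
    ext ⟨x, y⟩
    simp only [Set.mem_ofPred_eq, coe_union, Set.mem_union, mem_coe, mem_chords, sides,
      mem_image, mem_range, Prod.mk.injEq]
    constructor
    · rintro ⟨hxy, h⟩
      have := hlt h.symm
      by_cases hy : y = x + 1
      · exact Or.inl ⟨x, by omega, rfl, hy.symm⟩
      · exact Or.inr ⟨by omega, by omega, by omega, h⟩
    · rintro (⟨i, hi, rfl, rfl⟩ | ⟨-, hxy, -, h⟩)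
      · exact ⟨by omega, hH.adj_succ i (by omega)⟩
      · exact ⟨by omega, h⟩
  have hdisj : Disjoint sides (chords H 0 (n - 1)) := by
    rw [Finset.disjoint_left]
    rintro ⟨x, y⟩ h h'
    simp only [sides, mem_image, Prod.mk.injEq] at h
    obtain ⟨i, -, rfl, rfl⟩ := h
    have := (mem_chords.1 h').2.1
    omega
  rw [H.ncard_edgeSet_eq_ncard_lt, hpairs, Set.ncard_coe_finset, card_union_of_disjoint hdisj,
    hsides] at hE
  unfold HasMaxChords
  omega

theorem IsOuterplanarOn.adj_sub_two (hH : IsOuterplanarOn n H) (hn : 2 ≤ n) :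
    H.Adj (n - 2) (n - 1) := by
  simpa [show n - 2 + 1 = n - 1 by omega] using hH.adj_succ (n - 2) (by omega)

theorem IsOuterplanarOn.ncard_neighborSet_succ (hH : IsOuterplanarOn n H) (hb : a + 2 < n)
    (h : H.Adj a (a + 2)) : (H.neighborSet (a + 1)).ncard = 2 := by
  refine ncard_neighborSet_eq_two (hH.adj_succ a (by omega)).symm (hH.adj_succ (a + 1) hb)
    (by omega) fun u hu ↦ ?_
  obtain ⟨h₁, h₂⟩ := hH.nonCrossing.mem_Icc_of_adj h (by omega) (by omega) hu
  have := hu.ne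
  omega

theorem IsOuterplanarOn.ncard_neighborSet_zero (hH : IsOuterplanarOn n H)
    (hlt : ∀ ⦃i j⦄, H.Adj i j → i < n) (hn : 3 ≤ n) (hroot : H.Adj 0 (n - 1))
    (h : H.Adj 1 (n - 1)) : (H.neighborSet 0).ncard = 2 := by
  refine ncard_neighborSet_eq_two (hH.adj_succ 0 (by omega)) hroot (by omega) fun u hu ↦ ?_
  have := hlt hu.symm
  have := hu.ne
  by_contra! hu'
  exact hH.nonCrossing (b := 1) (by omega) (by omega) (by omega) hu h

theorem IsOuterplanarOn.ncard_neighborSet_last (hH : IsOuterplanarOn n H)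
    (hlt : ∀ ⦃i j⦄, H.Adj i j → i < n) (hn : 3 ≤ n) (hroot : H.Adj 0 (n - 1))
    (h : H.Adj 0 (n - 2)) : (H.neighborSet (n - 1)).ncard = 2 := by
  refine ncard_neighborSet_eq_two hroot.symm (hH.adj_sub_two (by omega)).symm (by omega)
    fun u hu ↦ ?_
  have := hlt hu.symm
  have := hu.ne
  by_contra! hu'
  exact hH.nonCrossing (a := 0) (b := u) (by omega) (by omega) (by omega) h hu.symm

variable {c₁ c₂ c₃ c₄ : Fin 4} {D₁ D₂ E₁ E₂ : Finset (Fin 4)} {f g : ℕ → Finset (Fin 4)}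

/-- A colouring of the polygon `a, …, b` whose ends, which it shares with the rest of the
polygon, see at least the colours `D₁` and `D₂` inside it. -/
structure IsColoringOn (H : SimpleGraph ℕ) (a b : ℕ) (c₁ c₂ : Fin 4) (D₁ D₂ : Finset (Fin 4))
    (f : ℕ → Finset (Fin 4)) : Prop where
  left : f a = {c₁}
  right : f b = {c₂}
  eq_empty : ∀ v, v < a ∨ b < v → f v = ∅
  card_le : ∀ v, a < v → v < b → #(f v) ≤ capacity H v
  sees : ∀ v, a < v → v < b → ∀ c, SeesColor H f v c
  sees_left : ∀ c ∈ D₁, SeesColor H f a c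
  sees_right : ∀ c ∈ D₂, SeesColor H f b c

theorem isColoringOn_succ (hadj : H.Adj a (a + 1)) (hD₁ : D₁ ⊆ {c₁, c₂}) (hD₂ : D₂ ⊆ {c₁, c₂}) :
    IsColoringOn H a (a + 1) c₁ c₂ D₁ D₂
      (fun v ↦ if v = a then {c₁} else if v = a + 1 then {c₂} else ∅) where
  left := by simp
  right := by simp
  eq_empty v hv := by simp [show v ≠ a by omega, show v ≠ a + 1 by omega]
  card_le v hv hv' := by omega
  sees v hv hv' := by omega
  sees_left c hc := by
    rcases mem_insert.1 (hD₁ hc) with rfl | hc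
    · exact ⟨a, Or.inl rfl, by simp⟩
    · exact ⟨a + 1, Or.inr hadj, by simp_all⟩
  sees_right c hc := by
    rcases mem_insert.1 (hD₂ hc) with rfl | hc
    · exact ⟨a, Or.inr hadj.symm, by simp⟩
    · exact ⟨a + 1, Or.inl rfl, by simp_all⟩

theorem isColoringOn_add_two (hH : IsOuterplanarOn n H) (hb : a + 2 < n) (h₀₂ : H.Adj a (a + 2))
    (hc : c₁ ≠ c₂) (D₁ D₂ : Finset (Fin 4)) :
    IsColoringOn H a (a + 2) c₁ c₂ D₁ D₂
      (fun v ↦ if v = a then {c₁} else if v = a + 2 then {c₂} else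
        if v = a + 1 then {c₁, c₂}ᶜ else ∅) := by
  set f : ℕ → Finset (Fin 4) := fun v ↦ if v = a then {c₁} else if v = a + 2 then {c₂} else
    if v = a + 1 then {c₁, c₂}ᶜ else ∅
  have htri := fun c ↦ SeesColor.of_triangle (f := f) (c := c) (hH.adj_succ a (by omega))
    (hH.adj_succ (a + 1) hb : H.Adj (a + 1) (a + 2)) h₀₂ (by
      by_cases h₁ : c = c₁
      · simp [f, h₁]
      by_cases h₂ : c = c₂ <;> simp [f, h₁, h₂, show a + 2 ≠ a by omega])
  have hcard : #({c₁, c₂}ᶜ : Finset (Fin 4)) = 2 := by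
    rw [card_compl, card_pair hc]; rfl
  refine ⟨by simp [f], by simp [f], fun v hv ↦ ?_, fun v hv hv' ↦ ?_, fun v hv hv' c ↦ ?_,
    fun c _ ↦ (htri c).1, fun c _ ↦ (htri c).2.2⟩
  · simp [f, show v ≠ a by omega, show v ≠ a + 2 by omega, show v ≠ a + 1 by omega]
  · obtain rfl : v = a + 1 := by omega
    simp only [f, show a + 1 ≠ a by omega, show a + 1 ≠ a + 2 by omega, if_false, if_true, hcard,
      capacity, hH.ncard_neighborSet_succ hb h₀₂, le_refl]
  · obtain rfl : v = a + 1 := by omega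
    exact (htri c).2.1

theorem IsColoringOn.sup (hL : IsColoringOn H a z c₁ c₃ (D₁.erase c₂) E₁ f)
    (hR : IsColoringOn H z b c₃ c₂ E₂ (D₂.erase c₁) g) (haz : a < z) (hzb : z < b)
    (hab : H.Adj a b) (haz' : H.Adj a z) (hzb' : H.Adj z b)
    (hE : ∀ c, c = c₁ ∨ c = c₂ ∨ c = c₃ ∨ c ∈ E₁ ∨ c ∈ E₂) :
    IsColoringOn H a b c₁ c₂ D₁ D₂ (f ⊔ g) := by
  have ha : c₁ ∈ (f ⊔ g) a := (le_sup_left : f ≤ f ⊔ g) a (by simp [hL.left])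
  have hb : c₂ ∈ (f ⊔ g) b := (le_sup_right : g ≤ f ⊔ g) b (by simp [hR.right])
  refine ⟨?_, ?_, fun v hv ↦ ?_, fun v hv hv' ↦ ?_, fun v hv hv' c ↦ ?_, fun c hc ↦ ?_,
    fun c hc ↦ ?_⟩
  · simp [hL.left, hR.eq_empty a (by omega)]
  · simp [hR.right, hL.eq_empty b (by omega)]
  · simp [hL.eq_empty v (by omega), hR.eq_empty v (by omega)]
  · rcases lt_trichotomy v z with hvz | rfl | hvz
    · simpa [hR.eq_empty v (by omega)] using hL.card_le v hv hvz
    · simpa [hL.right, hR.left] using one_le_capacity H v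
    · simpa [hL.eq_empty v (by omega)] using hR.card_le v hvz hv'
  · rcases lt_trichotomy v z with hvz | rfl | hvz
    · exact (hL.sees v hv hvz c).mono le_sup_left
    · rcases hE c with rfl | rfl | rfl | hc | hc
      · exact ⟨a, Or.inr haz'.symm, ha⟩
      · exact ⟨b, Or.inr hzb', hb⟩
      · exact ⟨v, Or.inl rfl, (le_sup_left : f ≤ f ⊔ g) v (by simp [hL.right])⟩
      · exact (hL.sees_right c hc).mono le_sup_left
      · exact (hR.sees_left c hc).mono le_sup_right
    · exact (hR.sees v hvz hv' c).mono le_sup_right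
  · by_cases h : c = c₂
    · exact ⟨b, Or.inr hab, h ▸ hb⟩
    · exact (hL.sees_left c (mem_erase.2 ⟨h, hc⟩)).mono le_sup_left
  · by_cases h : c = c₁
    · exact ⟨a, Or.inr hab.symm, h ▸ ha⟩
    · exact (hR.sees_right c (mem_erase.2 ⟨h, hc⟩)).mono le_sup_right

theorem IsColoringOn.sees_and_card_le (hf : IsColoringOn H a b c₁ c₂ univ univ f) {v : ℕ}
    (hav : a ≤ v) (hvb : v ≤ b) : (∀ c, SeesColor H f v c) ∧ #(f v) ≤ capacity H v := by
  rcases hav.eq_or_lt with rfl | hav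
  · exact ⟨fun c ↦ hf.sees_left c (mem_univ c), by simpa [hf.left] using one_le_capacity H _⟩
  rcases hvb.eq_or_lt with rfl | hvb
  · exact ⟨fun c ↦ hf.sees_right c (mem_univ c), by simpa [hf.right] using one_le_capacity H _⟩
  exact ⟨hf.sees v hav hvb, hf.card_le v hav hvb⟩

theorem IsColoringOn.sees_and_card_le_sup_ear (hf : IsColoringOn H a b c₁ c₂ ∅ ∅ f)
    (hab : H.Adj a b) {e : ℕ} (he : e < a ∨ b < e) (hea : H.Adj e a) (heb : H.Adj e b)
    (hdeg : (H.neighborSet e).ncard = 2) (hc : ∀ c, c = c₁ ∨ c = c₂ ∨ c = c₃ ∨ c = c₄) {v : ℕ}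
    (hv : v = e ∨ a ≤ v ∧ v ≤ b) :
    (∀ c, SeesColor H (f ⊔ fun u ↦ if u = e then {c₃, c₄} else ∅) v c) ∧
      #((f ⊔ fun u ↦ if u = e then {c₃, c₄} else ∅) v) ≤ capacity H v := by
  set F := f ⊔ fun u ↦ if u = e then {c₃, c₄} else ∅
  have hFa : F a = {c₁} := by simp [F, hf.left, hea.ne']
  have hFb : F b = {c₂} := by simp [F, hf.right, heb.ne']
  have hFe : F e = {c₃, c₄} := by simp [F, hf.eq_empty e he]
  have htri : ∀ c, SeesColor H F a c ∧ SeesColor H F b c ∧ SeesColor H F e c := fun c ↦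
    SeesColor.of_triangle hab heb.symm hea.symm (by
      rcases hc c with rfl | rfl | rfl | rfl <;> simp [hFa, hFb, hFe])
  rcases hv with hv | ⟨hav, hvb⟩
  · rw [hv]
    exact ⟨fun c ↦ (htri c).2.2, by simp [hFe, capacity, hdeg, card_le_two]⟩
  rcases hav.eq_or_lt with hva | hav
  · rw [← hva]
    exact ⟨fun c ↦ (htri c).1, by simpa [hFa] using one_le_capacity H a⟩
  rcases hvb.eq_or_lt with hvb' | hvb
  · rw [hvb']
    exact ⟨fun c ↦ (htri c).2.1, by simpa [hFb] using one_le_capacity H b⟩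
  refine ⟨fun c ↦ (hf.sees v hav hvb c).mono le_sup_left, ?_⟩
  simpa [F, show v ≠ e by omega] using hf.card_le v hav hvb

theorem exists_third_color (hc : c₁ ≠ c₂) (hD : #(D₁ \ {c₁, c₂}) ≤ 1) :
    ∃ c₃, c₃ ≠ c₁ ∧ c₃ ≠ c₂ ∧ D₁ ⊆ {c₁, c₂, c₃} := by
  obtain ⟨d, hd⟩ := card_le_one_iff_subset_singleton.1 hD
  have key : ∀ c₁ c₂ d : Fin 4, c₁ ≠ c₂ → ∃ c₃, c₃ ≠ c₁ ∧ c₃ ≠ c₂ ∧ (d = c₁ ∨ d = c₂ ∨ d = c₃) := by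
    decide
  obtain ⟨c₃, h₁, h₂, h₃⟩ := key c₁ c₂ d hc
  refine ⟨c₃, h₁, h₂, fun c hc ↦ ?_⟩
  by_cases hc' : c ∈ ({c₁, c₂} : Finset (Fin 4))
  · simp only [mem_insert, mem_singleton] at hc' ⊢; tauto
  · have := mem_singleton.1 (hd (mem_sdiff.2 ⟨hc, hc'⟩))
    subst this
    simpa using h₃

theorem exists_fourth_color (h₁₂ : c₁ ≠ c₂) (h₁₃ : c₁ ≠ c₃) (h₂₃ : c₂ ≠ c₃) :
    ∃ c₄, ∀ c, c = c₁ ∨ c = c₂ ∨ c = c₃ ∨ c = c₄ := by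
  revert c₁ c₂ c₃; decide

/-- The colours at the apex `z` of the polygon `a, …, b`, where `edgeL` and `edgeR` say that the
sides `az` and `zb` are single edges: `c₃` for `z`, and the demands `E₁`, `E₂` at `z` on the two
sides. -/
theorem exists_apex_colors (hc : c₁ ≠ c₂) (hD₁ : #(D₁ \ {c₁, c₂}) ≤ 1) (hD₂ : #(D₂ \ {c₁, c₂}) ≤ 1)
    {edgeL edgeR : Prop} (h : ¬(edgeL ∧ edgeR)) :
    ∃ c₃ E₁ E₂, c₃ ≠ c₁ ∧ c₃ ≠ c₂ ∧ #(D₁.erase c₂ \ {c₁, c₃}) ≤ 1 ∧ #(E₁ \ {c₁, c₃}) ≤ 1 ∧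
      #(E₂ \ {c₃, c₂}) ≤ 1 ∧ #(D₂.erase c₁ \ {c₃, c₂}) ≤ 1 ∧
      (edgeL → D₁.erase c₂ ⊆ {c₁, c₃} ∧ E₁ ⊆ {c₁, c₃}) ∧
      (edgeR → E₂ ⊆ {c₃, c₂} ∧ D₂.erase c₁ ⊆ {c₃, c₂}) ∧
      ∀ c, c = c₁ ∨ c = c₂ ∨ c = c₃ ∨ c ∈ E₁ ∨ c ∈ E₂ := by
  obtain ⟨c₃, h₃₁, h₃₂, hD⟩ := exists_third_color hc
    (D₁ := if edgeL then D₁ else D₂) (by split_ifs <;> assumption)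
  obtain ⟨c₄, hc₄⟩ := exists_fourth_color hc h₃₁.symm h₃₂.symm
  -- `z` receives `c₄` from whichever of its two sides is not a single edge
  refine ⟨c₃, if edgeL then ∅ else {c₄}, if edgeL then {c₄} else ∅, h₃₁, h₃₂,
    (card_erase_sdiff_le (by intro c; simp; tauto)).trans hD₁,
    (card_le_card sdiff_subset).trans (by split_ifs <;> simp),
    (card_le_card sdiff_subset).trans (by split_ifs <;> simp),
    (card_erase_sdiff_le (by intro c; simp; tauto)).trans hD₂, fun hL ↦ ?_, fun hR ↦ ?_,
    fun c ↦ ?_⟩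
  · rw [if_pos hL, insert_comm] at hD
    exact ⟨subset_insert_iff.1 hD, by simp [hL]⟩
  · have hL : ¬edgeL := fun hL ↦ h ⟨hL, hR⟩
    rw [if_neg hL] at hD
    rw [pair_comm c₃ c₂]
    exact ⟨by simp [hL], subset_insert_iff.1 hD⟩
  · obtain h | h | h | rfl := hc₄ c
    · exact Or.inl h
    · exact Or.inr (Or.inl h)
    · exact Or.inr (Or.inr (Or.inl h))
    · by_cases hL : edgeL <;> simp [hL]

theorem IsOuterplanarOn.exists_isColoringOn (hH : IsOuterplanarOn n H) (hb : b < n) (hab : a < b)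
    (ht : HasMaxChords H a b) (hc : c₁ ≠ c₂) (hD₁ : #(D₁ \ {c₁, c₂}) ≤ 1)
    (hD₂ : #(D₂ \ {c₁, c₂}) ≤ 1) (hedge : b = a + 1 → D₁ ⊆ {c₁, c₂} ∧ D₂ ⊆ {c₁, c₂}) :
    ∃ f, IsColoringOn H a b c₁ c₂ D₁ D₂ f := by
  induction h : b - a using Nat.strong_induction_on generalizing a b c₁ c₂ D₁ D₂ with
  | _ d ih =>
  subst h
  by_cases h₁ : b = a + 1
  · subst h₁
    exact ⟨_, isColoringOn_succ (hH.adj_succ a hb) (hedge rfl).1 (hedge rfl).2⟩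
  by_cases h₂ : b = a + 2
  · subst h₂
    exact ⟨_, isColoringOn_add_two hH hb (ht.adj hH hb hab) hc D₁ D₂⟩
  obtain ⟨hab', htL, htR⟩ := ht.split hH hb (by omega)
  have ha := hH.adj_succ a (by omega)
  have haz := adj_apex ha (b := b) (by omega)
  have hz₁ := lt_apex ha (b := b) (by omega)
  have hz₂ : apex H a b < b := apex_lt (by omega)
  set z := apex H a b
  obtain ⟨c₃, E₁, E₂, h₃₁, h₃₂, hD₁', hE₁, hE₂, hD₂', hedgeL, hedgeR, hE⟩ :=
    exists_apex_colors hc hD₁ hD₂ (edgeL := z = a + 1) (edgeR := b = z + 1) (by omega)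
  obtain ⟨f, hL⟩ := ih (z - a) (by omega) (by omega) hz₁ htL h₃₁.symm hD₁' hE₁ hedgeL rfl
  obtain ⟨g, hR⟩ := ih (b - z) (by omega) hb hz₂ htR h₃₂ hE₂ hD₂' hedgeR rfl
  exact ⟨f ⊔ g, hL.sup hR hz₁ hz₂ hab' haz (htR.adj hH hb hz₂) hE⟩

theorem IsOuterplanarOn.exists_coloring (hH : IsOuterplanarOn n H)
    (hlt : ∀ ⦃i j⦄, H.Adj i j → i < n) (ht : HasMaxChords H 0 (n - 1)) (hn : 3 ≤ n) :
    ∃ F : ℕ → Finset (Fin 4), ∀ v < n, (∀ c, SeesColor H F v c) ∧ #(F v) ≤ capacity H v := by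
  obtain ⟨hroot, htL, htR⟩ := ht.split hH (by omega) (by omega)
  have h₀₁ : H.Adj 0 1 := hH.adj_succ 0 (by omega)
  have hz₀ := lt_apex h₀₁ (b := n - 1) (by omega)
  have hzn : apex H 0 (n - 1) < n - 1 := apex_lt (by omega)
  have h₀z := adj_apex h₀₁ (b := n - 1) (by omega)
  have hzn' := htR.adj hH (by omega) hzn
  set z := apex H 0 (n - 1)
  have hc : ∀ c : Fin 4, c = 0 ∨ c = 1 ∨ c = 2 ∨ c = 3 := by decide
  by_cases hz₁ : z = 1
  · rw [hz₁] at htR hzn'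
    obtain ⟨f, hf⟩ := hH.exists_isColoringOn (c₁ := 0) (c₂ := 1) (D₁ := ∅) (D₂ := ∅)
      (by omega) (by omega) htR (by decide) (by simp) (by simp) (by simp)
    exact ⟨_, fun v hv ↦ hf.sees_and_card_le_sup_ear hzn' (by omega) h₀₁ hroot
      (hH.ncard_neighborSet_zero hlt hn hroot hzn') hc (by omega)⟩
  by_cases hz₂ : z = n - 2
  · rw [hz₂] at htL h₀z
    obtain ⟨f, hf⟩ := hH.exists_isColoringOn (c₁ := 0) (c₂ := 1) (D₁ := ∅) (D₂ := ∅)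
      (by omega) (by omega) htL (by decide) (by simp) (by simp) (by simp)
    have hdeg := hH.ncard_neighborSet_last hlt hn hroot h₀z
    exact ⟨_, fun v hv ↦ hf.sees_and_card_le_sup_ear h₀z (by omega) hroot.symm
      (hH.adj_sub_two (by omega)).symm hdeg hc (by omega)⟩
  obtain ⟨f, hL⟩ := hH.exists_isColoringOn (c₁ := 0) (c₂ := 2) (D₁ := univ.erase 1) (D₂ := {3})
    (by omega) hz₀ htL (by decide) (by decide) (by decide) (by omega)
  obtain ⟨g, hR⟩ := hH.exists_isColoringOn (c₁ := 2) (c₂ := 1) (D₁ := ∅) (D₂ := univ.erase 0)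
    (by omega) hzn htR (by decide) (by decide) (by decide) (by omega)
  have hF := hL.sup hR hz₀ hzn hroot h₀z hzn' (by simpa using hc)
  exact ⟨_, fun v hv ↦ hF.sees_and_card_le (Nat.zero_le v) (by omega)⟩

section mop

variable [NeZero n] {G : SimpleGraph (Fin n)}

theorem IsMop.isOuterplanarOn (hG : IsMop G) : IsOuterplanarOn n (G.map Fin.valEmbedding) where
  adj_succ i hi := (SimpleGraph.map_adj _ _ _ _).2
    ⟨⟨i, by omega⟩, _, hG.1 _, rfl, Fin.val_add_one_of_lt' (i := ⟨i, by omega⟩) hi⟩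
  nonCrossing a b c d hab hbc hcd hac hbd := by
    obtain ⟨a, c, hac, rfl, rfl⟩ := (SimpleGraph.map_adj _ _ _ _).1 hac
    obtain ⟨b, d, hbd, rfl, rfl⟩ := (SimpleGraph.map_adj _ _ _ _).1 hbd
    exact hG.2.1 a b c d hab hbc hcd ‹G.Adj a c› ‹G.Adj b d›

theorem IsMop.exists_coloring (hG : IsMop G) (hn : 3 ≤ n) :
    ∃ F : Fin n → Finset (Fin 4), (∀ v c, SeesColor G F v c) ∧ ∀ v, #(F v) ≤ capacity G v := by
  have hlt : ∀ ⦃i j⦄, (G.map Fin.valEmbedding).Adj i j → i < n := by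
    intro i j h
    obtain ⟨i, j, -, rfl, -⟩ := (SimpleGraph.map_adj _ _ _ _).1 h
    exact i.2
  have hE : (G.map Fin.valEmbedding).edgeSet.ncard = 2 * n - 3 := by
    rw [SimpleGraph.edgeSet_map, Set.ncard_image_of_injective _ (Function.Embedding.injective _),
      hG.2.2]
  obtain ⟨F, hF⟩ := hG.isOuterplanarOn.exists_coloring hlt
    (hG.isOuterplanarOn.hasMaxChords hlt hE (by omega)) hn
  refine ⟨F ∘ Fin.valEmbedding, fun v c ↦ ((hF v v.2).1 c).of_map, fun v ↦ ?_⟩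
  rw [← capacity_map G Fin.valEmbedding]
  exact (hF v v.2).2

end mop

theorem mop_disjDomNum_le_domNum_le {n : ℕ} [NeZero n] (G : SimpleGraph (Fin n))
    (hn : 4 ≤ n) (hG : IsMop G) :
    disjDomNum G ≤ domNum G ∧ domNum G ≤ (n + degTwoCount G) / 4 := by
  refine ⟨disjDomNum_le_domNum G, ?_⟩
  obtain ⟨F, hsees, hcap⟩ := hG.exists_coloring (by omega)
  obtain ⟨D, hD, hcard⟩ := exists_isDomSet_card_mul_le hsees
  have h4 : 4 * D.ncard ≤ n + degTwoCount G := calc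
    4 * D.ncard ≤ ∑ v, #(F v) := by simpa using hcard
    _ ≤ ∑ v, capacity G v := sum_le_sum fun v _ ↦ hcap v
    _ = n + degTwoCount G := sum_capacity G
  have hγ : domNum G ≤ D.ncard := Nat.sInf_le ⟨D, hD, rfl⟩
  exact hγ.trans ((Nat.le_div_iff_mul_le (by norm_num)).2 (by rwa [mul_comm]))
end

section
/- Let G be a maximal outerplanar graph of order n ≥ 4. Define the contraction of the outer edge {n−2, n−1} of G as follows: let f : Fin n → Fin (n−1) be the map sending x to x for x < n−1 and sending n−1 to n−2, and let H be the simple graph on Fin (n−1) in which distinct vertices a and b are adjacent if and only if there exist vertices x, y of G with G.Adj x y, f x = a and f y = b. Then H is a maximal outerplanar graph of order n−1, i.e., H satisfies conditions (i)–(iii) of the representation. -/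
/-! Contracting the outer edge `{n-2, n-1}` relabels vertices monotonically, so it keeps the
outer cycle and creates no crossing. It loses at most two edges: the contracted edge, and one
edge of the triangle on it, since in a non-crossing graph the last two vertices have at most one
common neighbour. Applied inductively, the same contraction shows that a non-crossing graph on
`m ≥ 2` convex vertices has at most `2m - 3` edges; hence the contraction of a mop, which keeps at
least `(2n - 3) - 2` edges, has exactly `2(n - 1) - 3`. -/

open SimpleGraph

namespace SimpleGraph

def Noncrossing {V : Type*} [LinearOrder V] (K : SimpleGraph V) : Prop :=
  ∀ a b c d : V, a < b → b < c → c < d → K.Adj a c → ¬ K.Adj b d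

variable {V W : Type*} [LinearOrder V] {K : SimpleGraph V}

theorem Noncrossing.map [LinearOrder W] (hK : K.Noncrossing) {f : V → W} (hf : Monotone f) :
    (K.map f).Noncrossing := by
  rintro _ _ _ _ hab hbc hcd ⟨-, x, y, hxy, rfl, rfl⟩ ⟨-, u, v, huv, rfl, rfl⟩
  exact hK x u y v (hf.reflect_lt hab) (hf.reflect_lt hbc) (hf.reflect_lt hcd) hxy huv

theorem Noncrossing.commonNeighbors_subsingleton (hK : K.Noncrossing) {a b : V} (hab : a < b)
    (hb : ∀ x, a < x → x = b) : (K.commonNeighbors a b).Subsingleton := by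
  have hlt : ∀ x ∈ K.commonNeighbors a b, x < a := fun x hx ↦ by
    rw [mem_commonNeighbors] at hx
    refine lt_of_not_ge fun hax ↦ ?_
    rcases hax.lt_or_eq with hax | rfl
    · exact hx.2.ne (hb x hax).symm
    · exact hx.1.ne rfl
  have hnot_lt : ∀ x ∈ K.commonNeighbors a b, ∀ y ∈ K.commonNeighbors a b, ¬ x < y :=
    fun x hx y hy hxy ↦ hK x y a b hxy (hlt y hy) hab
      (K.mem_commonNeighbors.1 hx).1.symm (K.mem_commonNeighbors.1 hy).2.symm
  exact fun x hx y hy ↦ le_antisymm (not_lt.1 (hnot_lt y hy x hx)) (not_lt.1 (hnot_lt x hx y hy))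

/-- The edges that contracting `s(a, b)` can lose: `s(a, b)` itself, and `s(x, b)` for a common
neighbour `x` of `a` and `b`, which merges with `s(x, a)`. -/
def contractLoss (K : SimpleGraph V) (a b : V) : Set (Sym2 V) :=
  insert s(a, b) ((fun x ↦ s(x, b)) '' K.commonNeighbors a b)

theorem Noncrossing.ncard_contractLoss_le_two (hK : K.Noncrossing) {a b : V} (hab : a < b)
    (hb : ∀ x, a < x → x = b) : (K.contractLoss a b).ncard ≤ 2 := by
  have h := hK.commonNeighbors_subsingleton hab hb
  calc (K.contractLoss a b).ncard
      ≤ ((fun x ↦ s(x, b)) '' K.commonNeighbors a b).ncard + 1 := Set.ncard_insert_le _ _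
    _ ≤ (K.commonNeighbors a b).ncard + 1 := by gcongr; exact Set.ncard_image_le h.finite
    _ ≤ 1 + 1 := by gcongr; exact (Set.ncard_le_one h.finite).2 fun x hx y hy ↦ h hx hy

theorem exists_lt_adj_of_mem_edgeSet {e : Sym2 V} (he : e ∈ K.edgeSet) :
    ∃ x y, x < y ∧ K.Adj x y ∧ e = s(x, y) := by
  induction e using Sym2.ind with | _ x y =>
  rcases (K.ne_of_adj he).lt_or_gt with h | h
  · exact ⟨x, y, h, he, rfl⟩
  · exact ⟨y, x, h, he.symm, Sym2.eq_swap⟩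

end SimpleGraph

theorem Fin.val_add_one_eq_ite {k : ℕ} [NeZero k] (x : Fin k) :
    ((x + 1 : Fin k) : ℕ) = if (x : ℕ) + 1 = k then 0 else (x : ℕ) + 1 := by
  rw [Fin.val_add, Fin.val_one', Nat.add_mod_mod]
  split_ifs with h
  · rw [h, Nat.mod_self]
  · exact Nat.mod_eq_of_lt (by omega)

section ContractLastEdge

variable {n m : ℕ} {f : Fin n → Fin m}

theorem monotone_of_val_eq_min (hf : ∀ x, (f x : ℕ) = min (x : ℕ) (m - 1)) : Monotone f :=
  fun x y hxy ↦ by rw [Fin.le_def, hf, hf]; exact min_le_min_right _ hxy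

theorem SimpleGraph.map_adj_add_one [NeZero n] [NeZero m] {K : SimpleGraph (Fin n)}
    (hK : ∀ x, K.Adj x (x + 1)) (hnm : n = m + 1) (hm : 2 ≤ m)
    (hf : ∀ x, (f x : ℕ) = min (x : ℕ) (m - 1)) (i : Fin m) : (K.map f).Adj i (i + 1) := by
  have hi := i.isLt
  let x : Fin n := ⟨if (i : ℕ) + 1 = m then m else i, by split_ifs <;> omega⟩
  refine ⟨fun h ↦ ?_, x, x + 1, hK x, Fin.ext ?_, Fin.ext ?_⟩
  · have := congrArg Fin.val h
    rw [Fin.val_add_one_eq_ite] at this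
    split_ifs at this <;> omega
  all_goals
    simp only [hf, Fin.val_add_one_eq_ite, x]
    split_ifs <;> omega

theorem SimpleGraph.exists_adj_of_mem_edgeSet_sdiff_contractLoss (hnm : n = m + 1)
    (hf : ∀ x, (f x : ℕ) = min (x : ℕ) (m - 1)) {K : SimpleGraph (Fin n)} {a b : Fin n}
    (ha : (a : ℕ) = m - 1) (hb : (b : ℕ) = m) {e : Sym2 (Fin n)}
    (he : e ∈ K.edgeSet \ K.contractLoss a b) :
    ∃ x y, K.Adj x y ∧ e = s(x, y) ∧ (f x : ℕ) < f y ∧ (y = b → ¬ K.Adj x a) := by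
  obtain ⟨he, heR⟩ := he
  obtain ⟨x, y, hxy, hadj, rfl⟩ := exists_lt_adj_of_mem_edgeSet he
  refine ⟨x, y, hadj, rfl, ?_, ?_⟩
  · have : ¬ (x = a ∧ y = b) := by rintro ⟨rfl, rfl⟩; exact heR (Set.mem_insert _ _)
    rw [Fin.ext_iff, Fin.ext_iff] at this
    rw [Fin.lt_def] at hxy
    have := y.isLt
    rw [hf, hf]
    omega
  · rintro rfl hxa
    exact heR (Set.mem_insert_of_mem _ ⟨x, K.mem_commonNeighbors.2 ⟨hxa.symm, hadj.symm⟩, rfl⟩)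

theorem SimpleGraph.injOn_map_edgeSet_sdiff_contractLoss (hnm : n = m + 1)
    (hf : ∀ x, (f x : ℕ) = min (x : ℕ) (m - 1)) {K : SimpleGraph (Fin n)} {a b : Fin n}
    (ha : (a : ℕ) = m - 1) (hb : (b : ℕ) = m) :
    Set.InjOn (Sym2.map f) (K.edgeSet \ K.contractLoss a b) := by
  intro e he e' he' heq
  obtain ⟨x, y, hxy, rfl, hlt, hy⟩ := exists_adj_of_mem_edgeSet_sdiff_contractLoss hnm hf ha hb he
  obtain ⟨u, v, huv, rfl, hlt', hv⟩ :=
    exists_adj_of_mem_edgeSet_sdiff_contractLoss hnm hf ha hb he'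
  rw [Sym2.map_mk, Sym2.map_mk, Sym2.eq_iff, Fin.ext_iff, Fin.ext_iff, Fin.ext_iff,
    Fin.ext_iff] at heq
  simp only [hf] at heq hlt hlt'
  -- `f x < f y ≤ m - 1` puts `x` (and likewise `u`) where `f` is injective.
  have hxu : x = u := Fin.ext (by omega)
  subst hxu
  suffices y = v by rw [this]
  by_contra hne
  have : (y = a ∧ v = b) ∨ (y = b ∧ v = a) := by
    have := y.isLt; have := v.isLt
    rw [Fin.ext_iff] at hne
    simp only [Fin.ext_iff, ha, hb]
    omega
  rcases this with ⟨rfl, rfl⟩ | ⟨rfl, rfl⟩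
  · exact hv rfl hxy
  · exact hy rfl huv

theorem SimpleGraph.Noncrossing.ncard_edgeSet_le_map_add_two {K : SimpleGraph (Fin n)}
    (hK : K.Noncrossing) (hnm : n = m + 1) (hf : ∀ x, (f x : ℕ) = min (x : ℕ) (m - 1)) :
    K.edgeSet.ncard ≤ (K.map f).edgeSet.ncard + 2 := by
  rcases Nat.eq_zero_or_pos m with rfl | hm
  · have : K.edgeSet = ∅ := Set.eq_empty_of_forall_notMem fun e he ↦ by
      obtain ⟨x, y, hxy, -, -⟩ := exists_lt_adj_of_mem_edgeSet he
      rw [Fin.lt_def] at hxy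
      omega
    simp [this]
  let a : Fin n := ⟨m - 1, by omega⟩
  let b : Fin n := ⟨m, by omega⟩
  have hab : a < b := Fin.lt_def.2 (by simp only [a, b]; omega)
  have hb : ∀ x, a < x → x = b := fun x hx ↦ by
    rw [Fin.lt_def] at hx
    exact Fin.ext (by simp only [a, b] at hx ⊢; omega)
  have hmaps : ∀ e ∈ K.edgeSet \ K.contractLoss a b, Sym2.map f e ∈ (K.map f).edgeSet :=
    fun e he ↦ by
      obtain ⟨x, y, hadj, rfl, hlt, -⟩ :=
        exists_adj_of_mem_edgeSet_sdiff_contractLoss hnm hf rfl rfl he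
      exact map_adj_apply' hadj (Fin.ne_of_lt (Fin.lt_def.2 hlt))
  calc K.edgeSet.ncard
      ≤ (K.edgeSet \ K.contractLoss a b).ncard + (K.contractLoss a b).ncard :=
        Set.ncard_le_ncard_sdiff_add_ncard _ _
    _ ≤ (K.map f).edgeSet.ncard + 2 :=
      add_le_add (Set.ncard_le_ncard_of_injOn _ hmaps
        (injOn_map_edgeSet_sdiff_contractLoss hnm hf rfl rfl)) (hK.ncard_contractLoss_le_two hab hb)

theorem SimpleGraph.Noncrossing.ncard_edgeSet_le {m : ℕ} (hm : 2 ≤ m) {K : SimpleGraph (Fin m)}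
    (hK : K.Noncrossing) : K.edgeSet.ncard ≤ 2 * m - 3 := by
  induction m, hm using Nat.le_induction with
  | base =>
    classical
    rw [Set.ncard_eq_toFinset_card']
    exact K.card_edgeFinset_le_card_choose_two
  | succ m hm ih =>
    let f : Fin (m + 1) → Fin m := fun x ↦ ⟨min (x : ℕ) (m - 1), by omega⟩
    have hf : ∀ x, (f x : ℕ) = min (x : ℕ) (m - 1) := fun _ ↦ rfl
    have hcontract := hK.ncard_edgeSet_le_map_add_two rfl hf
    have := ih (hK.map (monotone_of_val_eq_min hf))
    omega

end ContractLastEdge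

theorem mop_contraction_isMop {n : ℕ} [NeZero n] [NeZero (n - 1)]
    (G : SimpleGraph (Fin n)) (hn : 4 ≤ n) (hG : IsMop G)
    (f : Fin n → Fin (n - 1))
    (hf : ∀ x : Fin n, (f x).val = if x.val < n - 1 then x.val else n - 2)
    (H : SimpleGraph (Fin (n - 1)))
    (hH : ∀ a b : Fin (n - 1),
      H.Adj a b ↔ a ≠ b ∧ ∃ x y : Fin n, G.Adj x y ∧ f x = a ∧ f y = b) :
    IsMop H := by
  obtain ⟨hG_outer, hG_noncrossing : G.Noncrossing, hG_card⟩ := hG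
  obtain rfl : H = G.map f := SimpleGraph.ext <| funext₂ fun a b ↦ propext (hH a b)
  have hnm : n = n - 1 + 1 := by omega
  have hf_min : ∀ x, (f x : ℕ) = min (x : ℕ) (n - 1 - 1) := fun x ↦ by
    rw [hf]; split_ifs <;> omega
  have hH_noncrossing := hG_noncrossing.map (monotone_of_val_eq_min hf_min)
  have hH_card_le := hH_noncrossing.ncard_edgeSet_le (by omega : 2 ≤ n - 1)
  have hG_card_le := hG_noncrossing.ncard_edgeSet_le_map_add_two hnm hf_min
  refine ⟨G.map_adj_add_one hG_outer hnm (by omega) hf_min, hH_noncrossing, ?_⟩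
  omega
end

section
/- If G is a maximal outerplanar graph of order n ≥ 3, then γ(G) ≤ ⌊n/3⌋. -/
open SimpleGraph

/-! A maximal outerplanar graph is a triangulated polygon, so it has a proper 3-colouring, and
every vertex lies in a triangle, whose three vertices carry all three colours. Hence every colour
class dominates, and the smallest one has at most `⌊n/3⌋` vertices (Fisk's argument).

Maximality is given here by the edge count: a noncrossing graph containing the outer edges has at
most `2 (b - a) - 1` edges inside the polygon `a, a + 1, …, b`, and when this count is attained
the polygon is split by an apex `m` into the polygons `a, …, m` and `m, …, b`, which attain it
again. -/

namespace SimpleGraph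

variable {V α : Type*} {G : SimpleGraph V}

theorem Coloring.isDomSet_colorClass [Fintype α] (C : G.Coloring α)
    (hclique : ∀ v, ∃ s : Finset V, v ∈ s ∧ G.IsNClique (Fintype.card α) s) (c : α) :
    IsDomSet G (C.colorClass c) := by
  intro v hv
  obtain ⟨s, hvs, hs⟩ := hclique v
  obtain ⟨u, hus, hu⟩ := C.surjOn_of_card_le_isClique hs.isClique hs.card_eq.ge (Set.mem_univ c)
  exact ⟨u, hu, hs.isClique hus hvs fun huv => hv (huv ▸ hu)⟩

theorem Coloring.domNum_le_card_div_card [Fintype V] [Fintype α] [Nonempty α]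
    (C : G.Coloring α) (hclique : ∀ v, ∃ s : Finset V, v ∈ s ∧ G.IsNClique (Fintype.card α) s) :
    domNum G ≤ Fintype.card V / Fintype.card α := by
  classical
  obtain ⟨c, hc⟩ := Fintype.exists_card_fiber_lt_of_card_lt_mul C
    (n := Fintype.card V / Fintype.card α + 1) (Nat.lt_mul_div_succ _ Fintype.card_pos)
  have hclass : (C.colorClass c).ncard < Fintype.card V / Fintype.card α + 1 := by
    simpa [← Set.ncard_coe_finset, Coloring.colorClass] using hc
  calc domNum G ≤ (C.colorClass c).ncard := Nat.sInf_le ⟨_, C.isDomSet_colorClass hclique c, rfl⟩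
    _ ≤ Fintype.card V / Fintype.card α := Nat.le_of_lt_succ hclass

end SimpleGraph

section Polygon

variable {n : ℕ} {G : SimpleGraph (Fin n)}

def IsNoncrossing (G : SimpleGraph (Fin n)) : Prop :=
  ∀ a b c d : Fin n, a < b → b < c → c < d → G.Adj a c → ¬ G.Adj b d

def edgesIn (G : SimpleGraph (Fin n)) (a b : Fin n) : Set (Sym2 (Fin n)) :=
  G.edgeSet ∩ (Set.Icc a b).sym2

@[simp]
theorem mk_mem_edgesIn {a b u v : Fin n} :
    s(u, v) ∈ edgesIn G a b ↔ G.Adj u v ∧ u ∈ Set.Icc a b ∧ v ∈ Set.Icc a b := by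
  simp [edgesIn]

theorem edgesIn_subset_singleton {a b : Fin n} (hab : a.val + 1 = b.val) :
    edgesIn G a b ⊆ {s(a, b)} := by
  intro e he
  induction e using Sym2.inductionOn with | hf u v => ?_
  obtain ⟨hadj, hu, hv⟩ := mk_mem_edgesIn.1 he
  have hne := Fin.val_ne_of_ne hadj.ne
  rcases (by simp only [Set.mem_Icc] at hu hv; omega :
      u.val = a.val ∧ v.val = b.val ∨ u.val = b.val ∧ v.val = a.val) with
    ⟨hua, hvb⟩ | ⟨hub, hva⟩
  · rw [Fin.ext hua, Fin.ext hvb, Set.mem_singleton_iff]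
  · rw [Fin.ext hub, Fin.ext hva, Set.mem_singleton_iff, Sym2.eq_swap]

theorem IsNoncrossing.eq_of_lt_of_lt {a b m u v : Fin n} (hG : IsNoncrossing G)
    (ham : G.Adj a m) (hlast : ∀ x, m < x → x < b → ¬ G.Adj a x) (huv : G.Adj u v)
    (hau : a ≤ u) (hum : u < m) (hmv : m < v) (hvb : v ≤ b) : u = a ∧ v = b := by
  obtain rfl : u = a := by
    by_contra hne
    exact hG a u m v (lt_of_le_of_ne hau (Ne.symm hne)) hum hmv ham huv
  exact ⟨rfl, by_contra fun hne => hlast v hmv (lt_of_le_of_ne hvb hne) huv⟩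

theorem IsNoncrossing.edgesIn_subset {a b m : Fin n} (hG : IsNoncrossing G) (ham : G.Adj a m)
    (hlast : ∀ x, m < x → x < b → ¬ G.Adj a x) :
    edgesIn G a b ⊆ insert s(a, b) (edgesIn G a m ∪ edgesIn G m b) := by
  intro e he
  induction e using Sym2.inductionOn with | hf u v => ?_
  wlog huv : u ≤ v generalizing u v
  · rw [Sym2.eq_swap (a := u)] at he ⊢
    exact this v u he (le_of_not_ge huv)
  obtain ⟨hadj, ⟨hau, hub⟩, hav, hvb⟩ := mk_mem_edgesIn.1 he
  by_cases hvm : v ≤ m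
  · exact Or.inr (Or.inl (mk_mem_edgesIn.2 ⟨hadj, ⟨hau, huv.trans hvm⟩, hav, hvm⟩))
  by_cases hmu : m ≤ u
  · exact Or.inr (Or.inr (mk_mem_edgesIn.2 ⟨hadj, ⟨hmu, hub⟩, hmu.trans huv, hvb⟩))
  obtain ⟨rfl, rfl⟩ := hG.eq_of_lt_of_lt ham hlast hadj hau (not_le.1 hmu) (not_le.1 hvm) hvb
  exact Set.mem_insert _ _

theorem exists_last_adj [NeZero n] (houter : ∀ i : Fin n, G.Adj i (i + 1)) {a b : Fin n}
    (hab : a.val + 1 < b.val) :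
    ∃ m, a < m ∧ m < b ∧ G.Adj a m ∧ ∀ x, m < x → x < b → ¬ G.Adj a x := by
  classical
  have hsucc : (a + 1).val = a.val + 1 := Fin.val_add_one_of_lt' (by omega)
  obtain ⟨m, hm, hmax⟩ := (Finset.univ.filter fun x => a < x ∧ x < b ∧ G.Adj a x).exists_max_image
    id ⟨a + 1, Finset.mem_filter.2 ⟨Finset.mem_univ _, by omega, by omega, houter a⟩⟩
  simp only [Finset.mem_filter, Finset.mem_univ, true_and, id] at hm hmax
  exact ⟨m, hm.1, hm.2.1, hm.2.2, fun x hmx hxb hax =>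
    (hmax x ⟨hm.1.trans hmx, hxb, hax⟩).not_gt hmx⟩

theorem ncard_edgesIn_le [NeZero n] (houter : ∀ i : Fin n, G.Adj i (i + 1))
    (hG : IsNoncrossing G) {a b : Fin n} (hab : a < b) :
    (edgesIn G a b).ncard ≤ 2 * (b.val - a.val) - 1 := by
  by_cases hone : a.val + 1 = b.val
  · calc (edgesIn G a b).ncard ≤ ({s(a, b)} : Set _).ncard :=
          Set.ncard_le_ncard (edgesIn_subset_singleton hone)
      _ ≤ 2 * (b.val - a.val) - 1 := by rw [Set.ncard_singleton]; omega
  obtain ⟨m, ham, hmb, hadj, hlast⟩ := exists_last_adj houter (by omega : a.val + 1 < b.val)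
  have h₁ := ncard_edgesIn_le houter hG ham
  have h₂ := ncard_edgesIn_le houter hG hmb
  calc (edgesIn G a b).ncard
      ≤ (insert s(a, b) (edgesIn G a m ∪ edgesIn G m b)).ncard :=
        Set.ncard_le_ncard (hG.edgesIn_subset hadj hlast)
    _ ≤ (edgesIn G a m).ncard + (edgesIn G m b).ncard + 1 :=
        (Set.ncard_insert_le _ _).trans (Nat.add_le_add_right (Set.ncard_union_le _ _) 1)
    _ ≤ 2 * (b.val - a.val) - 1 := by omega
termination_by b.val - a.val
decreasing_by all_goals omega

/-- The polygon `a, a + 1, …, b`, closed by the chord `ab`, is triangulated by edges of `G`;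
`m` is the apex of the triangle on `ab`. -/
inductive IsTriangulated (G : SimpleGraph (Fin n)) : Fin n → Fin n → Prop
  | edge {a b : Fin n} : a.val + 1 = b.val → G.Adj a b → IsTriangulated G a b
  | apex {a m b : Fin n} : G.Adj a b → IsTriangulated G a m → IsTriangulated G m b →
      IsTriangulated G a b

theorem IsTriangulated.adj {a b : Fin n} (h : IsTriangulated G a b) : G.Adj a b := by
  cases h <;> assumption

theorem IsTriangulated.lt {a b : Fin n} (h : IsTriangulated G a b) : a < b := by
  induction h with
  | edge hab => omega
  | apex _ _ _ ih₁ ih₂ => exact ih₁.trans ih₂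

/-- Attaining the bound forces the chord `ab`, and the last neighbour of `a` before `b` is then
the apex. -/
theorem isTriangulated_of_ncard_edgesIn [NeZero n] (houter : ∀ i : Fin n, G.Adj i (i + 1))
    (hG : IsNoncrossing G) {a b : Fin n} (hab : a < b)
    (hcard : (edgesIn G a b).ncard = 2 * (b.val - a.val) - 1) : IsTriangulated G a b := by
  by_cases hone : a.val + 1 = b.val
  · have hsucc : a + 1 = b := Fin.ext (by rw [Fin.val_add_one_of_lt' (by omega), hone])
    exact .edge hone (hsucc ▸ houter a)
  obtain ⟨m, ham, hmb, hadj, hlast⟩ := exists_last_adj houter (by omega : a.val + 1 < b.val)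
  have h₁ := ncard_edgesIn_le houter hG ham
  have h₂ := ncard_edgesIn_le houter hG hmb
  have hsplit := hG.edgesIn_subset hadj hlast
  have hab_adj : G.Adj a b := by
    by_contra hnab
    have hsub : edgesIn G a b ⊆ edgesIn G a m ∪ edgesIn G m b :=
      (Set.subset_insert_iff_of_notMem fun h => hnab (mk_mem_edgesIn.1 h).1).1 hsplit
    have := (Set.ncard_le_ncard hsub).trans (Set.ncard_union_le _ _)
    omega
  have hle : (edgesIn G a b).ncard ≤ (edgesIn G a m).ncard + (edgesIn G m b).ncard + 1 :=
    (Set.ncard_le_ncard hsplit).trans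
      ((Set.ncard_insert_le _ _).trans (Nat.add_le_add_right (Set.ncard_union_le _ _) 1))
  exact .apex hab_adj (isTriangulated_of_ncard_edgesIn houter hG ham (by omega))
    (isTriangulated_of_ncard_edgesIn houter hG hmb (by omega))
termination_by b.val - a.val
decreasing_by all_goals omega

theorem IsTriangulated.exists_coloring (hG : IsNoncrossing G) {a b : Fin n}
    (h : IsTriangulated G a b) {ca cb : Fin 3} (hc : ca ≠ cb) :
    ∃ f : Fin n → Fin 3, f a = ca ∧ f b = cb ∧ ∀ u v, s(u, v) ∈ edgesIn G a b → f u ≠ f v := by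
  induction h generalizing ca cb with
  | @edge a b hab _ =>
    have hba : b ≠ a := fun h => by subst h; omega
    refine ⟨fun x => if x = a then ca else cb, by simp, by simp [hba], fun u v huv => ?_⟩
    rcases Sym2.eq_iff.1 (edgesIn_subset_singleton hab huv) with ⟨rfl, rfl⟩ | ⟨rfl, rfl⟩
    · simpa [hba] using hc
    · simpa [hba] using hc.symm
  | @apex a m b hab h₁ h₂ ih₁ ih₂ =>
    obtain ⟨cm, hcma, hcmb⟩ : ∃ cm : Fin 3, cm ≠ ca ∧ cm ≠ cb := by
      revert ca cb; decide
    obtain ⟨f₁, hf₁a, hf₁m, hf₁⟩ := ih₁ hcma.symm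
    obtain ⟨f₂, hf₂m, hf₂b, hf₂⟩ := ih₂ hcmb
    have hlast : ∀ x, m < x → x < b → ¬ G.Adj a x := fun x hmx hxb hax =>
      hG a m x b h₁.lt hmx hxb hax h₂.adj
    let f : Fin n → Fin 3 := fun x => if x ≤ m then f₁ x else f₂ x
    have hff₁ : ∀ x ≤ m, f x = f₁ x := fun x hx => if_pos hx
    have hff₂ : ∀ x, m ≤ x → f x = f₂ x := fun x hx => by
      rcases hx.eq_or_lt with rfl | hx
      · rw [hff₁ _ le_rfl, hf₁m, hf₂m]
      · exact if_neg (not_le.2 hx)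
    refine ⟨f, by rw [hff₁ a h₁.lt.le, hf₁a], by rw [hff₂ b h₂.lt.le, hf₂b], fun u v huv => ?_⟩
    rcases hG.edgesIn_subset h₁.adj hlast huv with huv | huv | huv
    · rcases Sym2.eq_iff.1 huv with ⟨rfl, rfl⟩ | ⟨rfl, rfl⟩
      · rw [hff₁ _ h₁.lt.le, hff₂ _ h₂.lt.le, hf₁a, hf₂b]; exact hc
      · rw [hff₁ _ h₁.lt.le, hff₂ _ h₂.lt.le, hf₁a, hf₂b]; exact hc.symm
    · obtain ⟨-, hu, hv⟩ := mk_mem_edgesIn.1 huv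
      rw [hff₁ u hu.2, hff₁ v hv.2]; exact hf₁ u v huv
    · obtain ⟨-, hu, hv⟩ := mk_mem_edgesIn.1 huv
      rw [hff₂ u hu.1, hff₂ v hv.1]; exact hf₂ u v huv

theorem IsTriangulated.exists_isNClique {a b : Fin n} (h : IsTriangulated G a b)
    (hab : a.val + 1 < b.val) {x : Fin n} (hx : x ∈ Set.Icc a b) :
    ∃ s : Finset (Fin n), x ∈ s ∧ G.IsNClique 3 s := by
  induction h with
  | edge hab' => omega
  | @apex a m b hab' h₁ h₂ ih₁ ih₂ =>
    by_cases hxamb : x = a ∨ x = m ∨ x = b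
    · exact ⟨{a, m, b}, by simpa using hxamb, is3Clique_triple_iff.2 ⟨h₁.adj, hab', h₂.adj⟩⟩
    simp only [not_or] at hxamb
    obtain ⟨hxa, hxm, hxb⟩ := hxamb
    obtain ⟨hax, hxb'⟩ := hx
    rcases lt_or_gt_of_ne hxm with hlt | hlt
    · exact ih₁ (by omega) ⟨hax, hlt.le⟩
    · exact ih₂ (by omega) ⟨hlt.le, hxb'⟩

end Polygon

theorem mop_domNum_le_third {n : ℕ} [NeZero n] (G : SimpleGraph (Fin n))
    (hn : 3 ≤ n) (hG : IsMop G) :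
    domNum G ≤ n / 3 := by
  obtain ⟨houter, hcross, hcard⟩ := hG
  let a : Fin n := ⟨0, by omega⟩
  let b : Fin n := ⟨n - 1, by omega⟩
  have hIcc : Set.Icc a b = Set.univ :=
    Set.eq_univ_of_forall fun x => ⟨Nat.zero_le _, Nat.le_sub_one_of_lt x.isLt⟩
  have hedges : edgesIn G a b = G.edgeSet := by simp [edgesIn, hIcc]
  have htri : IsTriangulated G a b :=
    isTriangulated_of_ncard_edgesIn houter hcross (show 0 < n - 1 by omega)
      (by rw [hedges, hcard]; simp only [a, b]; omega)
  obtain ⟨f, -, -, hf⟩ := htri.exists_coloring hcross (by decide : (0 : Fin 3) ≠ 1)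
  let C : G.Coloring (Fin 3) := Coloring.mk f fun huv => hf _ _ (hedges ▸ huv)
  simpa using C.domNum_le_card_div_card fun v => by
    simpa using htri.exists_isNClique (show 0 + 1 < n - 1 by omega) (hIcc ▸ Set.mem_univ v)
end
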